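/- arXiv:math/0612606 — 8 statements merged into one kernel-verified Lean document; each statement's English description precedes it below -/
import Mathlib

section
/- Assume 𝐒 is bounded but 𝐒₋₁ is not bounded on 𝐄. Let T be a Toeplitz operator on 𝐄. Then for every z in the open disk { z ∈ ℂ : |z| < ρ(𝐒) } the series T̃(z) = Σ_{n∈ℤ} T̂(n) zⁿ converges, and T̃ is holomorphic there with |T̃(z)| ≤ ‖T‖ (i.e. T̃ belongs to H^∞ of the open disk of radius ρ(𝐒)). -/
/-!
Conjugating an operator `A` by the rotations `γ_θ` and averaging against a weight `c(θ)` multiplies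
the matrix entry `(n, k)` of `A` by the Fourier coefficient `ĉ(n - k)`, and since every `γ_θ` is
an isometry the result has norm at most `(2π)⁻¹ ∫ |c| · ‖A‖`. For a Toeplitz operator `T` this
isolates the diagonals: the `m`-th one is `T̂(m) 𝐒^m`, so `|T̂(m)| ‖𝐒^m‖ ≤ ‖T‖` and the power series
`Σ T̂(m) z^m` converges on `|z| < ρ(𝐒)`; the diagonal `-(m+1)` is `T̂(-m-1) 𝐒₋₁^(m+1)`, and it
vanishes because `𝐒₋₁` is unbounded. Averaging against the Fejér kernel shows that the Fejér means
`σ_N` of the symbol satisfy `‖σ_N(𝐒)‖ ≤ ‖T‖`. Finally every `z` with `|z| < ρ(𝐒)` lies in the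
spectrum of `𝐒` (otherwise the resolvent would be a Toeplitz operator with symbol `z^(-m-1)`, which
forces `ρ(𝐒) ≤ |z|`), so `|σ_N(z)| ≤ ‖σ_N(𝐒)‖ ≤ ‖T‖`, and `σ_N(z) → T̃(z)`.
-/

open scoped ENNReal NNReal Topology Real ComplexConjugate
open Complex Filter Polynomial

lemma pow_le_norm_pow_of_lt_spectralRadius {A : Type*} [NormedRing A] [NormedAlgebra ℂ A]
    [CompleteSpace A] [NormOneClass A] {a : A} {t : ℝ≥0}
    (ht : (t : ℝ≥0∞) < spectralRadius ℂ a) (m : ℕ) : (t : ℝ) ^ m ≤ ‖a ^ m‖ := by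
  have : Nontrivial A := NormOneClass.nontrivial
  have h : (t : ℝ≥0∞) ^ m ≤ ‖a ^ m‖₊ :=
    calc (t : ℝ≥0∞) ^ m ≤ spectralRadius ℂ a ^ m := pow_le_pow_left' ht.le m
      _ ≤ spectralRadius ℂ (a ^ m) := spectrum.spectralRadius_pow_le' a m
      _ ≤ ‖a ^ m‖₊ := spectrum.spectralRadius_le_nnnorm (a ^ m)
  exact_mod_cast h

lemma spectralRadius_le_of_forall_norm_pow_le {A : Type*} [NormedRing A] [NormedAlgebra ℂ A]
    [CompleteSpace A] [NormOneClass A] {a : A} (C : ℝ) (r : ℝ≥0)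
    (h : ∀ m : ℕ, ‖a ^ m‖ ≤ C * r ^ m) : spectralRadius ℂ a ≤ r := by
  by_contra! hr
  obtain ⟨t, hrt, ht⟩ := ENNReal.lt_iff_exists_nnreal_btwn.mp hr
  have hrt : (r : ℝ) < t := by exact_mod_cast hrt
  have ht0 : (0 : ℝ) < t := r.coe_nonneg.trans_lt hrt
  have hlim : Tendsto (fun m : ℕ => C * ((r : ℝ) / t) ^ m) atTop (𝓝 (C * 0)) :=
    (tendsto_pow_atTop_nhds_zero_of_lt_one (by positivity) ((div_lt_one ht0).mpr hrt)).const_mul C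
  have hle : ∀ m : ℕ, 1 ≤ C * ((r : ℝ) / t) ^ m := fun m => by
    rw [div_pow, mul_div_assoc', le_div_iff₀ (by positivity), one_mul]
    exact (pow_le_norm_pow_of_lt_spectralRadius ht m).trans (h m)
  linarith [ge_of_tendsto' hlim hle]

lemma integral_exp_intCast_mul_I (d : ℤ) :
    ∫ θ in (0 : ℝ)..2 * π, exp (d * θ * I) = if d = 0 then (2 * π : ℂ) else 0 := by
  split_ifs with hd
  · simp [hd]
  have hdI : (d : ℂ) * I ≠ 0 := by simp [hd, I_ne_zero]
  simp_rw [mul_right_comm _ _ I]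
  rw [integral_exp_mul_complex hdI]
  have : (d : ℂ) * I * ↑(2 * π) = d * (2 * π * I) := by push_cast; ring
  rw [this, exp_int_mul_two_pi_mul_I]
  simp

/-- The sign convention is that of `fourierCoeff c (-d)`. -/
noncomputable def trigMoment (c : ℝ → ℂ) (d : ℤ) : ℂ :=
  (2 * π : ℂ)⁻¹ * ∫ θ in (0 : ℝ)..2 * π, c θ * exp (d * θ * I)

lemma trigMoment_exp (m d : ℤ) :
    trigMoment (fun θ => exp (-m * θ * I)) d = if d = m then 1 else 0 := by
  have h : ∀ θ : ℝ, exp (-m * θ * I) * exp (d * θ * I) = exp (((d - m : ℤ) : ℂ) * θ * I) :=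
    fun θ => by rw [← Complex.exp_add]; push_cast; ring_nf
  simp only [trigMoment, h, integral_exp_intCast_mul_I, sub_eq_zero]
  split_ifs
  · field_simp
  · simp

noncomputable def fejerKernel (N : ℕ) (θ : ℝ) : ℝ :=
  (N : ℝ)⁻¹ * ‖∑ j ∈ Finset.range N, exp (j * θ * I)‖ ^ 2

lemma continuous_fejerKernel (N : ℕ) : Continuous (fejerKernel N) := by
  unfold fejerKernel; fun_prop

lemma fejerKernel_nonneg (N : ℕ) (θ : ℝ) : 0 ≤ fejerKernel N θ := by
  unfold fejerKernel; positivity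

lemma ofReal_fejerKernel_mul_exp (N : ℕ) (d : ℤ) (θ : ℝ) :
    (fejerKernel N θ : ℂ) * exp (d * θ * I) = (N : ℂ)⁻¹ *
      ∑ j ∈ Finset.range N, ∑ l ∈ Finset.range N, exp (((j - l + d : ℤ) : ℂ) * θ * I) := by
  have hconj : ∀ l : ℕ, conj (exp (l * θ * I)) = exp (((-l : ℤ) : ℂ) * θ * I) := fun l => by
    rw [← exp_conj]; congr 1; simp [conj_ofReal]
  rw [fejerKernel, ofReal_mul, ofReal_pow, ← mul_conj', map_sum, mul_assoc, Finset.sum_mul_sum,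
    Finset.sum_mul]
  push_cast
  congr 1
  refine Finset.sum_congr rfl fun j _ => ?_
  rw [Finset.sum_mul]
  refine Finset.sum_congr rfl fun l _ => ?_
  rw [hconj, ← Complex.exp_add, ← Complex.exp_add]; push_cast; ring_nf

lemma trigMoment_fejerKernel (N d : ℕ) :
    trigMoment (fun θ => fejerKernel N θ) d = ((N - d : ℕ) : ℂ) / N := by
  have hint : ∀ j l : ℕ, ∫ θ in (0 : ℝ)..2 * π, exp (((j - l + d : ℤ) : ℂ) * θ * I) =
      if l = j + d then (2 * π : ℂ) else 0 := fun j l => by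
    rw [integral_exp_intCast_mul_I]; congr 1; apply propext; omega
  have hcount : ∀ j : ℕ, (∑ l ∈ Finset.range N, if l = j + d then (2 * π : ℂ) else 0) =
      if j ∈ Finset.range (N - d) then (2 * π : ℂ) else 0 := fun j => by
    rw [Finset.sum_ite_eq']; congr 1; simp only [Finset.mem_range]; apply propext; omega
  have hcont : ∀ j l : ℕ, Continuous fun θ : ℝ => exp (((j - l + d : ℤ) : ℂ) * θ * I) :=
    fun j l => by fun_prop
  simp only [trigMoment, ofReal_fejerKernel_mul_exp]
  rw [intervalIntegral.integral_const_mul, intervalIntegral.integral_finsetSum fun j _ =>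
    (continuous_finsetSum _ fun l _ => hcont j l).intervalIntegrable _ _]
  simp_rw [intervalIntegral.integral_finsetSum fun l _ => (hcont _ l).intervalIntegrable _ _,
    hint, hcount]
  rw [Finset.sum_ite_mem, Finset.range_inter_range, Finset.sum_const, Finset.card_range,
    min_eq_right (Nat.sub_le N d), nsmul_eq_mul]
  field_simp

lemma integral_fejerKernel_le (N : ℕ) : ∫ θ in (0 : ℝ)..2 * π, fejerKernel N θ ≤ 2 * π := by
  have h := trigMoment_fejerKernel N 0
  simp only [trigMoment, CharP.cast_eq_zero, Int.cast_zero, zero_mul, Complex.exp_zero, mul_one,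
    intervalIntegral.integral_ofReal, Nat.sub_zero] at h
  rw [inv_mul_eq_iff_eq_mul₀ (by simp [Real.pi_ne_zero])] at h
  have h' : ∫ θ in (0 : ℝ)..2 * π, fejerKernel N θ = 2 * π * (N / N : ℝ) := by
    apply ofReal_injective; rw [h]; push_cast; ring
  rw [h']
  exact mul_le_of_le_one_right (by positivity) (div_self_le_one (N : ℝ))

lemma sum_range_natSub_mul_eq_sum_partialSums (b : ℕ → ℂ) (N : ℕ) :
    ∑ m ∈ Finset.range N, ((N - m : ℕ) : ℂ) * b m =
      ∑ j ∈ Finset.range N, ∑ m ∈ Finset.range (j + 1), b m := by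
  induction N with
  | zero => simp
  | succ N ih =>
    have h : ∀ m ∈ Finset.range (N + 1), ((N + 1 - m : ℕ) : ℂ) * b m = (N - m : ℕ) * b m + b m :=
      fun m hm => by
        rw [Nat.sub_add_comm (Finset.mem_range_succ_iff.mp hm)]; push_cast; ring
    rw [Finset.sum_congr rfl h, Finset.sum_add_distrib,
      Finset.sum_range_succ (fun m => ((N - m : ℕ) : ℂ) * b m), ih,
      Finset.sum_range_succ (fun j => ∑ m ∈ Finset.range (j + 1), b m)]
    simp

lemma HasSum.tendsto_fejerMean {b : ℕ → ℂ} {s : ℂ} (h : HasSum b s) :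
    Tendsto (fun N : ℕ => ∑ m ∈ Finset.range N, ((N - m : ℕ) : ℂ) / N * b m) atTop (𝓝 s) := by
  have hpartial : Tendsto (fun j => ∑ m ∈ Finset.range (j + 1), b m) atTop (𝓝 s) :=
    (tendsto_add_atTop_iff_nat 1).mpr h.tendsto_sum_nat
  refine hpartial.cesaro_smul.congr fun N => ?_
  simp_rw [div_mul_eq_mul_div, ← Finset.sum_div, sum_range_natSub_mul_eq_sum_partialSums,
    Complex.real_smul]
  push_cast
  ring

noncomputable def fejerPoly (a : ℕ → ℂ) (N : ℕ) : ℂ[X] :=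
  ∑ m ∈ Finset.range N, C (((N - m : ℕ) : ℂ) / N * a m) * X ^ m

lemma coeff_fejerPoly (a : ℕ → ℂ) (N d : ℕ) :
    (fejerPoly a N).coeff d = ((N - d : ℕ) : ℂ) / N * a d := by
  simp only [fejerPoly, finsetSum_coeff, coeff_C_mul_X_pow, Finset.sum_ite_eq, Finset.mem_range]
  split_ifs with hd
  · rfl
  · simp [Nat.sub_eq_zero_of_le (not_lt.mp hd)]

lemma eval_fejerPoly (a : ℕ → ℂ) (N : ℕ) (z : ℂ) :
    (fejerPoly a N).eval z = ∑ m ∈ Finset.range N, ((N - m : ℕ) : ℂ) / N * (a m * z ^ m) := by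
  simp [fejerPoly, eval_finsetSum, mul_assoc]

/-- A Banach space of sequences satisfying (ℋ1)–(ℋ3) with isometric `γ_z`: `toSeq` is the
inclusion into `ℂ^ℤ⁺`, `e k` the unit sequence `e_k` and `rot z` the map `γ_z`. -/
structure RotationInvariantSeqSpace (E : Type*) [NormedAddCommGroup E] [NormedSpace ℂ E] where
  toSeq : E →ₗ[ℂ] ℕ → ℂ
  toSeq_injective : Function.Injective toSeq
  e : ℕ → E
  toSeq_e : ∀ k, toSeq (e k) = Pi.single k 1
  dense_span_e : Dense (Submodule.span ℂ (Set.range e) : Set E)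
  continuous_toSeq_apply : ∀ n, Continuous fun x => toSeq x n
  rot : ℂ → E → E
  toSeq_rot : ∀ z : ℂ, ‖z‖ = 1 → ∀ x n, toSeq (rot z x) n = z ^ n * toSeq x n
  norm_rot : ∀ z : ℂ, ‖z‖ = 1 → ∀ x, ‖rot z x‖ = ‖x‖

namespace RotationInvariantSeqSpace

variable {E : Type*} [NormedAddCommGroup E] [NormedSpace ℂ E]

lemma toSeq_e_apply (V : RotationInvariantSeqSpace E) (k n : ℕ) :
    V.toSeq (V.e k) n = if n = k then 1 else 0 := by
  simp [V.toSeq_e, Pi.single_apply]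

protected lemma nontrivial (V : RotationInvariantSeqSpace E) : Nontrivial E :=
  ⟨V.e 0, 0, fun h => by simpa [h] using V.toSeq_e_apply 0 0⟩

variable (V : RotationInvariantSeqSpace E)

lemma ext_toSeq {x y : E} (h : ∀ n, V.toSeq x n = V.toSeq y n) : x = y :=
  V.toSeq_injective (funext h)

lemma continuousLinearMap_ext {F : Type*} [NormedAddCommGroup F] [NormedSpace ℂ F]
    {f g : E →L[ℂ] F} (h : ∀ k, f (V.e k) = g (V.e k)) : f = g :=
  ContinuousLinearMap.ext_on V.dense_span_e (Set.forall_mem_range.mpr h)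

noncomputable def coord (n : ℕ) : E →L[ℂ] ℂ :=
  ⟨(LinearMap.proj n).comp V.toSeq, V.continuous_toSeq_apply n⟩

@[simp] lemma coord_apply (n : ℕ) (x : E) : V.coord n x = V.toSeq x n := rfl

noncomputable def rotation (θ : ℝ) : E →ₗᵢ[ℂ] E where
  toFun := V.rot (exp (θ * I))
  map_add' x y := V.ext_toSeq fun n => by simp [V.toSeq_rot _ (norm_exp_ofReal_mul_I θ), mul_add]
  map_smul' c x := V.ext_toSeq fun n => by
    simp [V.toSeq_rot _ (norm_exp_ofReal_mul_I θ)]; ring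
  norm_map' := V.norm_rot _ (norm_exp_ofReal_mul_I θ)

lemma toSeq_rotation (θ : ℝ) (x : E) (n : ℕ) :
    V.toSeq (V.rotation θ x) n = exp (n * θ * I) * V.toSeq x n := by
  show V.toSeq (V.rot _ x) n = _
  rw [V.toSeq_rot _ (norm_exp_ofReal_mul_I θ), ← Complex.exp_nat_mul, mul_assoc]

lemma rotation_e (θ : ℝ) (k : ℕ) : V.rotation θ (V.e k) = exp (k * θ * I) • V.e k :=
  V.ext_toSeq fun n => by
    rw [toSeq_rotation, map_smul, Pi.smul_apply, smul_eq_mul, toSeq_e_apply]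
    split_ifs with h <;> simp [h]

lemma continuous_rotation_apply (x : E) : Continuous fun θ => V.rotation θ x := by
  have hspan : ∀ y ∈ Submodule.span ℂ (Set.range V.e), Continuous fun θ => V.rotation θ y := by
    intro y hy
    induction hy using Submodule.span_induction with
    | mem y hy =>
      obtain ⟨k, rfl⟩ := hy
      simp_rw [rotation_e]
      fun_prop
    | zero => simpa using continuous_const
    | add y z _ _ hy hz => exact (hy.add hz).congr fun θ => (map_add _ y z).symm
    | smul c y _ hy => exact (hy.const_smul c).congr fun θ => (map_smul _ c y).symm
  refine continuous_of_uniform_approx_of_continuous fun u hu => ?_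
  obtain ⟨ε, hε, hεu⟩ := Metric.mem_uniformity_dist.mp hu
  obtain ⟨y, hy, hxy⟩ := V.dense_span_e.exists_dist_lt x hε
  exact ⟨_, hspan y hy, fun θ => hεu (by rwa [LinearIsometry.dist_map])⟩

lemma continuous_rotation : Continuous fun p : ℝ × E => V.rotation p.1 p.2 := by
  refine continuous_iff_continuousAt.mpr fun ⟨θ₀, x₀⟩ => ?_
  rw [ContinuousAt, tendsto_iff_norm_sub_tendsto_zero]
  have hbound : ∀ p : ℝ × E, ‖V.rotation p.1 p.2 - V.rotation θ₀ x₀‖ ≤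
      ‖p.2 - x₀‖ + ‖V.rotation p.1 x₀ - V.rotation θ₀ x₀‖ := fun p => by
    simpa only [← map_sub, LinearIsometry.norm_map] using
      norm_sub_le_norm_sub_add_norm_sub (V.rotation p.1 p.2) (V.rotation p.1 x₀) (V.rotation θ₀ x₀)
  refine squeeze_zero (fun _ => norm_nonneg _) hbound ?_
  have h1 : Tendsto (fun p : ℝ × E => ‖p.2 - x₀‖) (𝓝 (θ₀, x₀)) (𝓝 0) :=
    tendsto_iff_norm_sub_tendsto_zero.mp (continuous_snd.tendsto _)
  have h2 : Tendsto (fun p : ℝ × E => ‖V.rotation p.1 x₀ - V.rotation θ₀ x₀‖) (𝓝 (θ₀, x₀)) (𝓝 0) :=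
    tendsto_iff_norm_sub_tendsto_zero.mp
      (((V.continuous_rotation_apply x₀).comp continuous_fst).tendsto _)
  simpa using h1.add h2

noncomputable def rotConj (A : E →L[ℂ] E) (θ : ℝ) : E →L[ℂ] E :=
  (V.rotation θ).toContinuousLinearMap ∘L A ∘L (V.rotation (-θ)).toContinuousLinearMap

lemma norm_rotConj_apply_le (A : E →L[ℂ] E) (θ : ℝ) (x : E) :
    ‖V.rotConj A θ x‖ ≤ ‖A‖ * ‖x‖ := by
  simpa [rotConj] using A.le_opNorm (V.rotation (-θ) x)

lemma continuous_rotConj_apply (A : E →L[ℂ] E) (x : E) : Continuous fun θ => V.rotConj A θ x :=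
  V.continuous_rotation.comp (continuous_id.prodMk (A.continuous.comp
    (V.continuous_rotation.comp (continuous_neg.prodMk continuous_const))))

lemma toSeq_rotConj_e (A : E →L[ℂ] E) (θ : ℝ) (k n : ℕ) :
    V.toSeq (V.rotConj A θ (V.e k)) n =
      exp (((n - k : ℤ) : ℂ) * θ * I) * V.toSeq (A (V.e k)) n := by
  simp only [rotConj, ContinuousLinearMap.comp_apply, LinearIsometry.coe_toContinuousLinearMap,
    rotation_e, map_smul, toSeq_rotation, Pi.smul_apply, smul_eq_mul]
  rw [← mul_assoc, ← Complex.exp_add]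
  push_cast
  ring_nf

noncomputable def rotAverageₗ (A : E →L[ℂ] E) (c : C(ℝ, ℂ)) : E →ₗ[ℂ] E where
  toFun x := (2 * π : ℂ)⁻¹ • ∫ θ in (0 : ℝ)..2 * π, c θ • V.rotConj A θ x
  map_add' x y := by
    simp only [map_add, smul_add]
    rw [intervalIntegral.integral_add, smul_add] <;>
      exact (c.continuous.smul (V.continuous_rotConj_apply A _)).intervalIntegrable _ _
  map_smul' a x := by
    simp only [map_smul, smul_comm (c _) a, intervalIntegral.integral_smul, RingHom.id_apply]
    exact smul_comm _ _ _

lemma norm_rotAverageₗ_apply_le (A : E →L[ℂ] E) (c : C(ℝ, ℂ)) (x : E) :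
    ‖V.rotAverageₗ A c x‖ ≤ (2 * π)⁻¹ * (∫ θ in (0 : ℝ)..2 * π, ‖c θ‖) * ‖A‖ * ‖x‖ := by
  have hint : ‖∫ θ in (0 : ℝ)..2 * π, c θ • V.rotConj A θ x‖ ≤
      ∫ θ in (0 : ℝ)..2 * π, ‖c θ‖ * (‖A‖ * ‖x‖) := by
    refine intervalIntegral.norm_integral_le_of_norm_le (by positivity)
      (Eventually.of_forall fun θ _ => ?_)
      ((c.continuous.norm.mul continuous_const).intervalIntegrable _ _)
    rw [norm_smul]
    exact mul_le_mul_of_nonneg_left (V.norm_rotConj_apply_le A θ x) (norm_nonneg _)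
  rw [intervalIntegral.integral_mul_const] at hint
  have h2pi : ‖(2 * π : ℂ)⁻¹‖ = (2 * π)⁻¹ := by
    rw [norm_inv]; norm_cast; rw [Real.norm_of_nonneg (by positivity)]
  calc ‖V.rotAverageₗ A c x‖ = (2 * π)⁻¹ * ‖∫ θ in (0 : ℝ)..2 * π, c θ • V.rotConj A θ x‖ := by
        rw [rotAverageₗ, LinearMap.coe_mk, AddHom.coe_mk, norm_smul, h2pi]
    _ ≤ (2 * π)⁻¹ * ((∫ θ in (0 : ℝ)..2 * π, ‖c θ‖) * (‖A‖ * ‖x‖)) := by gcongr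
    _ = _ := by ring

noncomputable def rotAverage (A : E →L[ℂ] E) (c : C(ℝ, ℂ)) : E →L[ℂ] E :=
  (V.rotAverageₗ A c).mkContinuousOfExistsBound ⟨_, V.norm_rotAverageₗ_apply_le A c⟩

lemma norm_rotAverage_le (A : E →L[ℂ] E) (c : C(ℝ, ℂ))
    (hc : ∫ θ in (0 : ℝ)..2 * π, ‖c θ‖ ≤ 2 * π) : ‖V.rotAverage A c‖ ≤ ‖A‖ := by
  refine ContinuousLinearMap.opNorm_le_bound _ (norm_nonneg A) fun x => ?_
  refine (V.norm_rotAverageₗ_apply_le A c x).trans (mul_le_mul_of_nonneg_right ?_ (norm_nonneg x))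
  calc (2 * π)⁻¹ * (∫ θ in (0 : ℝ)..2 * π, ‖c θ‖) * ‖A‖ ≤ (2 * π)⁻¹ * (2 * π) * ‖A‖ := by gcongr
    _ = ‖A‖ := by field_simp

lemma toSeq_rotAverage_e [CompleteSpace E] (A : E →L[ℂ] E) (c : C(ℝ, ℂ)) (k n : ℕ) :
    V.toSeq (V.rotAverage A c (V.e k)) n = trigMoment c (n - k) * V.toSeq (A (V.e k)) n := by
  have hint : IntervalIntegrable (fun θ => c θ • V.rotConj A θ (V.e k))
      MeasureTheory.volume 0 (2 * π) :=
    (c.continuous.smul (V.continuous_rotConj_apply A _)).intervalIntegrable _ _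
  rw [← coord_apply]
  simp only [rotAverage, LinearMap.mkContinuousOfExistsBound_apply, rotAverageₗ, LinearMap.coe_mk,
    AddHom.coe_mk, map_smul, ← (V.coord n).intervalIntegral_comp_comm hint, coord_apply,
    toSeq_rotConj_e, smul_eq_mul, trigMoment, ← mul_assoc, intervalIntegral.integral_mul_const]

def IsShift (S : E →L[ℂ] E) : Prop :=
  ∀ x, V.toSeq (S x) 0 = 0 ∧ ∀ n, V.toSeq (S x) (n + 1) = V.toSeq x n

def IsToeplitz (A : E →L[ℂ] E) : Prop :=
  ∀ k n, V.toSeq (A (V.e (k + 1))) (n + 1) = V.toSeq (A (V.e k)) n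

variable {V} {S : E →L[ℂ] E}

namespace IsShift

lemma apply_e (hS : V.IsShift S) (k : ℕ) : S (V.e k) = V.e (k + 1) :=
  V.ext_toSeq fun n => by
    cases n with
    | zero => simp [(hS _).1, toSeq_e_apply]
    | succ n => simp [(hS _).2, toSeq_e_apply]

lemma pow_apply_e (hS : V.IsShift S) (j k : ℕ) : (S ^ j) (V.e k) = V.e (k + j) := by
  induction j generalizing k with
  | zero => rfl
  | succ j ih => rw [pow_succ, mul_apply_eq_comp, hS.apply_e, ih, add_right_comm]; rfl

lemma toSeq_pow_apply_add (hS : V.IsShift S) (j : ℕ) (x : E) (n : ℕ) :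
    V.toSeq ((S ^ j) x) (n + j) = V.toSeq x n := by
  induction j with
  | zero => rfl
  | succ j ih => rw [pow_succ', mul_apply_eq_comp, ← add_assoc, (hS _).2, ih]

lemma toSeq_aeval_e (hS : V.IsShift S) (P : ℂ[X]) (k n : ℕ) :
    V.toSeq (aeval S P (V.e k)) n = if k ≤ n then P.coeff (n - k) else 0 := by
  induction P using Polynomial.induction_on' with
  | add P Q hP hQ =>
    simp only [map_add, add_apply, Pi.add_apply, hP, hQ, coeff_add]
    split_ifs <;> simp
  | monomial m a =>
    rw [aeval_monomial, mul_apply_eq_comp, hS.pow_apply_e, Algebra.algebraMap_eq_smul_one,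
      smul_apply, one_apply_eq_self, map_smul, Pi.smul_apply,
      toSeq_e_apply, coeff_monomial, smul_eq_mul]
    split_ifs <;> first | omega | simp

lemma pow_succ_mul_toSeq_eq_one (hS : V.IsShift S) {z : ℂ} {y : E}
    (h : z • y - S y = V.e 0) (m : ℕ) : z ^ (m + 1) * V.toSeq y m = 1 := by
  have hcoord : ∀ n, z * V.toSeq y n - V.toSeq (S y) n = if n = 0 then 1 else 0 := fun n => by
    simpa [toSeq_e_apply] using congrFun (congrArg V.toSeq h) n
  induction m with
  | zero => simpa [(hS y).1] using hcoord 0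
  | succ m ih =>
    have hstep := hcoord (m + 1)
    rw [(hS y).2, if_neg m.succ_ne_zero, sub_eq_zero] at hstep
    rw [pow_succ, mul_assoc, hstep, ih]

end IsShift

lemma isToeplitz_of_commute (hS : V.IsShift S) {R : E →L[ℂ] E} (hR : Commute R S) :
    V.IsToeplitz R := fun k n => by
  rw [← hS.apply_e, ← mul_apply_eq_comp, hR.eq, mul_apply_eq_comp, (hS _).2]

namespace IsToeplitz

variable {A : E →L[ℂ] E}

lemma toSeq_e_add (hA : V.IsToeplitz A) (j k n : ℕ) :
    V.toSeq (A (V.e (k + j))) (n + j) = V.toSeq (A (V.e k)) n := by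
  induction j with
  | zero => rfl
  | succ j ih => rw [← add_assoc, ← add_assoc, hA, ih]

lemma toSeq_e_of_le (hA : V.IsToeplitz A) {k n : ℕ} (h : k ≤ n) :
    V.toSeq (A (V.e k)) n = V.toSeq (A (V.e 0)) (n - k) := by
  simpa [Nat.sub_add_cancel h] using hA.toSeq_e_add k 0 (n - k)

lemma toSeq_e_eq_ite (hA : V.IsToeplitz A) (hneg : ∀ m, V.toSeq (A (V.e (m + 1))) 0 = 0)
    (k n : ℕ) : V.toSeq (A (V.e k)) n = if k ≤ n then V.toSeq (A (V.e 0)) (n - k) else 0 := by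
  split_ifs with h
  · exact hA.toSeq_e_of_le h
  · obtain ⟨j, rfl⟩ : ∃ j, k = n + (j + 1) := ⟨k - n - 1, by omega⟩
    have h := hA.toSeq_e_add n (j + 1) 0
    rwa [zero_add, hneg, add_comm] at h

variable [CompleteSpace E]

lemma norm_toSeq_mul_norm_pow_le (hA : V.IsToeplitz A) (hS : V.IsShift S) (m : ℕ) :
    ‖V.toSeq (A (V.e 0)) m‖ * ‖S ^ m‖ ≤ ‖A‖ := by
  let c : C(ℝ, ℂ) := ⟨fun θ => exp (-(m : ℤ) * θ * I), by fun_prop⟩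
  have hc : ∀ d, trigMoment c d = if d = m then 1 else 0 := trigMoment_exp m
  have hD : V.rotAverage A c = V.toSeq (A (V.e 0)) m • S ^ m :=
    V.continuousLinearMap_ext fun k => V.ext_toSeq fun n => by
      rw [toSeq_rotAverage_e, smul_apply, hS.pow_apply_e, map_smul, Pi.smul_apply, smul_eq_mul,
        toSeq_e_apply, hc]
      by_cases h : n = k + m
      · rw [if_pos (by omega), if_pos h, one_mul, mul_one, hA.toSeq_e_of_le (by omega), h,
          Nat.add_sub_cancel_left]
      · rw [if_neg (by omega), if_neg h, zero_mul, mul_zero]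
  rw [← norm_smul, ← hD]
  exact V.norm_rotAverage_le A c (by simp [c, Complex.norm_exp])

lemma toSeq_e_succ_zero_eq_zero (hA : V.IsToeplitz A) (hS : V.IsShift S)
    (hleft : ¬ ∀ x : E, ∃ y : E, ∀ n, V.toSeq y n = V.toSeq x (n + 1)) (m : ℕ) :
    V.toSeq (A (V.e (m + 1))) 0 = 0 := by
  by_contra ha
  set a := V.toSeq (A (V.e (m + 1))) 0
  -- The diagonal `-(m+1)` of `A` is `a • 𝐒₋₁^(m+1)`, so `a⁻¹ • D ∘ S^m` is `𝐒₋₁` on `E`.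
  let c : C(ℝ, ℂ) := ⟨fun θ => exp (-((-(m + 1) : ℤ) : ℂ) * θ * I), by fun_prop⟩
  have hc : ∀ d, trigMoment c d = if d = -(m + 1) then 1 else 0 := trigMoment_exp _
  have hD : ∀ n, (V.coord n).comp (V.rotAverage A c) = a • V.coord (n + (m + 1)) := fun n =>
    V.continuousLinearMap_ext fun k => by
      rw [ContinuousLinearMap.comp_apply, coord_apply, toSeq_rotAverage_e, smul_apply, coord_apply,
        toSeq_e_apply, smul_eq_mul, hc]
      by_cases h : k = n + (m + 1)
      · rw [if_pos (by omega), if_pos h.symm, one_mul, mul_one, h]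
        simpa [add_comm] using hA.toSeq_e_add n (m + 1) 0
      · rw [if_neg (by omega), if_neg (Ne.symm h), zero_mul, mul_zero]
  refine hleft fun x => ⟨a⁻¹ • V.rotAverage A c ((S ^ m) x), fun n => ?_⟩
  have hn := congrArg (fun f : E →L[ℂ] ℂ => f ((S ^ m) x)) (hD n)
  simp only [ContinuousLinearMap.comp_apply, coord_apply, smul_apply, smul_eq_mul] at hn
  rw [map_smul, Pi.smul_apply, hn, smul_eq_mul, show n + (m + 1) = n + 1 + m by ring,
    hS.toSeq_pow_apply_add, inv_mul_cancel_left₀ ha]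

lemma norm_aeval_fejerPoly_le (hA : V.IsToeplitz A) (hS : V.IsShift S)
    (hneg : ∀ m, V.toSeq (A (V.e (m + 1))) 0 = 0) (N : ℕ) :
    ‖aeval S (fejerPoly (V.toSeq (A (V.e 0))) N)‖ ≤ ‖A‖ := by
  let c : C(ℝ, ℂ) := ⟨fun θ => fejerKernel N θ, continuous_ofReal.comp (continuous_fejerKernel N)⟩
  have hD : V.rotAverage A c = aeval S (fejerPoly (V.toSeq (A (V.e 0))) N) :=
    V.continuousLinearMap_ext fun k => V.ext_toSeq fun n => by
      rw [toSeq_rotAverage_e, hS.toSeq_aeval_e, hA.toSeq_e_eq_ite hneg, coeff_fejerPoly]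
      split_ifs with h
      · rw [← Nat.cast_sub h]
        exact congrArg (· * _) (trigMoment_fejerKernel N (n - k))
      · rw [mul_zero]
  have hc : ∫ θ in (0 : ℝ)..2 * π, ‖c θ‖ ≤ 2 * π := by
    simpa [c, Complex.norm_real, abs_of_nonneg (fejerKernel_nonneg N _)] using
      integral_fejerKernel_le N
  rw [← hD]
  exact V.norm_rotAverage_le A c hc

lemma spectralRadius_le_radius (hA : V.IsToeplitz A) (hS : V.IsShift S) :
    spectralRadius ℂ S ≤ (FormalMultilinearSeries.ofScalars ℂ (V.toSeq (A (V.e 0)))).radius := by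
  have := V.nontrivial
  refine ENNReal.le_of_forall_nnreal_lt fun t ht =>
    FormalMultilinearSeries.le_radius_of_bound _ ‖A‖ fun n => ?_
  rw [FormalMultilinearSeries.ofScalars_norm]
  exact (mul_le_mul_of_nonneg_left (pow_le_norm_pow_of_lt_spectralRadius ht n)
    (norm_nonneg _)).trans (hA.norm_toSeq_mul_norm_pow_le hS n)

lemma norm_le_of_hasSum (hA : V.IsToeplitz A) (hS : V.IsShift S)
    (hneg : ∀ m, V.toSeq (A (V.e (m + 1))) 0 = 0) {z s : ℂ} (hz : z ∈ spectrum ℂ S)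
    (hs : HasSum (fun m => V.toSeq (A (V.e 0)) m * z ^ m) s) : ‖s‖ ≤ ‖A‖ := by
  have := V.nontrivial
  refine le_of_tendsto' hs.tendsto_fejerMean.norm fun N => ?_
  rw [← eval_fejerPoly]
  exact (spectrum.norm_le_norm_of_mem (spectrum.subset_polynomial_aeval S _ ⟨z, hz, rfl⟩)).trans
    (hA.norm_aeval_fejerPoly_le hS hneg N)

end IsToeplitz

lemma IsShift.spectralRadius_le_of_notMem_spectrum [CompleteSpace E] (hS : V.IsShift S) {z : ℂ}
    (hz : z ∉ spectrum ℂ S) : spectralRadius ℂ S ≤ ‖z‖₊ := by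
  have := V.nontrivial
  -- The resolvent `R` commutes with `S`, so it is Toeplitz, and its symbol is `z^(-m-1)`.
  obtain ⟨u, hu⟩ := spectrum.notMem_iff.mp hz
  set R : E →L[ℂ] E := ↑u⁻¹
  have hres : z • R (V.e 0) - S (R (V.e 0)) = V.e 0 := by
    have h : ((algebraMap ℂ (E →L[ℂ] E) z - S) * R) (V.e 0) = V.e 0 := by
      rw [← hu, Units.mul_inv]; rfl
    simpa [Algebra.algebraMap_eq_smul_one] using h
  have hcoeff := hS.pow_succ_mul_toSeq_eq_one hres
  have hz0 : z ≠ 0 := by rintro rfl; simpa using hcoeff 0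
  have hR : V.IsToeplitz R := isToeplitz_of_commute hS <| Commute.units_inv_left <|
    hu ▸ (Algebra.commute_algebraMap_left z S).sub_left (Commute.refl S)
  refine spectralRadius_le_of_forall_norm_pow_le (‖R‖ * ‖z‖) ‖z‖₊ fun m => ?_
  have h := hR.norm_toSeq_mul_norm_pow_le hS m
  rw [eq_inv_of_mul_eq_one_right (hcoeff m), norm_inv, norm_pow,
    inv_mul_le_iff₀ (by positivity)] at h
  calc ‖S ^ m‖ ≤ ‖z‖ ^ (m + 1) * ‖R‖ := h
    _ = ‖R‖ * ‖z‖ * ‖z‖₊ ^ m := by push_cast; ring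

lemma IsShift.mem_spectrum_of_lt_spectralRadius [CompleteSpace E] (hS : V.IsShift S) {z : ℂ}
    (hz : (‖z‖₊ : ℝ≥0∞) < spectralRadius ℂ S) : z ∈ spectrum ℂ S := by
  by_contra h
  exact (hS.spectralRadius_le_of_notMem_spectrum h).not_gt hz

end RotationInvariantSeqSpace

/-- If `𝐒` is bounded but `𝐒₋₁` is not bounded, then for every Toeplitz operator `T`
the series `T̃(z) = Σ_{n∈ℤ} T̂(n) zⁿ` converges on the open disk `{ |z| < ρ(𝐒) }`, and
`T̃` is holomorphic there with `|T̃(z)| ≤ ‖T‖`. -/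
theorem stmt7
    {E : Type*} [NormedAddCommGroup E] [NormedSpace ℂ E] [CompleteSpace E]
    (ι : E →ₗ[ℂ] (ℕ → ℂ)) (hι : Function.Injective ι)
    (e : ℕ → E) (he : ∀ k : ℕ, ι (e k) = Pi.single k 1)
    (hdense : Dense (Submodule.span ℂ (Set.range e) : Set E))
    (hcoord : ∀ n : ℕ, Continuous fun x : E => ι x n)
    -- (ℋ3), strengthened so that each `γ_z` is an isometry of `𝐄`:
    (Γ : ℂ → E → E)
    (hΓ : ∀ z : ℂ, ‖z‖ = 1 → ∀ x : E, ∀ n : ℕ, ι (Γ z x) n = z ^ n * ι x n)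
    (hΓiso : ∀ z : ℂ, ‖z‖ = 1 → ∀ x : E, ‖Γ z x‖ = ‖x‖)
    -- `𝐒` is bounded, with restriction `Sop` to `𝐄`:
    (Sop : E →L[ℂ] E)
    (hSop : ∀ x : E, ι (Sop x) 0 = 0 ∧ ∀ n : ℕ, ι (Sop x) (n + 1) = ι x n)
    -- `𝐒₋₁` is not bounded:
    (hMnb : ¬ ∀ x : E, ∃ y : E, ∀ n : ℕ, ι y n = ι x (n + 1))
    -- `T` is a Toeplitz operator on `𝐄`:
    (T : E →L[ℂ] E)
    (hT : ∀ k n : ℕ, ι (T (e (k + 1))) (n + 1) = ι (T (e k)) n)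
    -- `Th` is the symbol sequence `T̂`:
    (Th : ℤ → ℂ)
    (hTh₁ : ∀ n : ℕ, Th n = ι (T (e 0)) n)
    (hTh₂ : ∀ n : ℕ, Th (-(n : ℤ)) = ι (T (e n)) 0) :
    ∃ f : ℂ → ℂ,
      (∀ z ∈ {z : ℂ | (‖z‖₊ : ℝ≥0∞) < spectralRadius ℂ Sop},
        HasSum (fun n : ℤ => Th n * z ^ n) (f z)) ∧
      DifferentiableOn ℂ f {z : ℂ | (‖z‖₊ : ℝ≥0∞) < spectralRadius ℂ Sop} ∧
      ∀ z ∈ {z : ℂ | (‖z‖₊ : ℝ≥0∞) < spectralRadius ℂ Sop}, ‖f z‖ ≤ ‖T‖ := by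
  let V : RotationInvariantSeqSpace E := ⟨ι, hι, e, he, hdense, hcoord, Γ, hΓ, hΓiso⟩
  have hS : V.IsShift Sop := hSop
  have hA : V.IsToeplitz T := hT
  have hneg : ∀ m, V.toSeq (T (V.e (m + 1))) 0 = 0 := hA.toSeq_e_succ_zero_eq_zero hS hMnb
  have hTh_neg : ∀ n : ℕ, Th (-(n + 1 : ℤ)) = 0 := fun n => by
    rw [← Nat.cast_succ]; exact (hTh₂ (n + 1)).trans (hneg n)
  let p := FormalMultilinearSeries.ofScalars ℂ (V.toSeq (T (V.e 0)))
  have hball : ∀ z : ℂ, (‖z‖₊ : ℝ≥0∞) < spectralRadius ℂ Sop → z ∈ Metric.eball 0 p.radius :=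
    fun z hz => by
      rw [Metric.mem_eball, edist_zero_right]; exact hz.trans_le (hA.spectralRadius_le_radius hS)
  have hsum : ∀ z : ℂ, (‖z‖₊ : ℝ≥0∞) < spectralRadius ℂ Sop →
      HasSum (fun n : ℕ => V.toSeq (T (V.e 0)) n * z ^ n) (p.sum z) := fun z hz => by
    simpa only [p, FormalMultilinearSeries.ofScalars_apply_eq, smul_eq_mul] using
      p.hasSum (hball z hz)
  refine ⟨p.sum, fun z hz => ?_, p.analyticOnNhd.differentiableOn.mono hball, fun z hz => ?_⟩
  · have h := HasSum.of_nat_of_neg_add_one (f := fun n : ℤ => Th n * z ^ n)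
      (by simpa only [zpow_natCast, hTh₁] using hsum z hz)
      (by simpa only [hTh_neg, zero_mul] using hasSum_zero)
    rwa [add_zero] at h
  · exact hA.norm_le_of_hasSum hS hneg (hS.mem_spectrum_of_lt_spectralRadius hz) (hsum z hz)
end

section
/- For every x ∈ E and every multiplier M on E, the map from the unit circle 𝕋 to E given by z ↦ ψ_z(M(ψ_{z⁻¹}(x))) is continuous. -/
/-!
Since `ψ_z` multiplies the `n`-th coordinate by `zⁿ` and coordinates determine vectors, each `ψ_z`
is a bounded operator with `ψ_z e_k = z^k e_k`; so `z ↦ ψ_z y` is continuous for `y ∈ F(ℤ)`.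
The `ψ_z` are uniformly bounded, hence equicontinuous, and `F(ℤ)` is dense, so `z ↦ ψ_z y` is
continuous for every `y`. A uniformly bounded, strongly continuous family of operators applied to
a continuous path gives a continuous path; apply this to the path `z ↦ M (ψ_{z⁻¹} x)`.
-/

open Filter Topology Set

section StrongContinuity

variable {X 𝕜 E F : Type*} [TopologicalSpace X] [NontriviallyNormedField 𝕜]
  [SeminormedAddCommGroup E] [NormedSpace 𝕜 E] [SeminormedAddCommGroup F] [NormedSpace 𝕜 F]
  {T : X → E →L[𝕜] F}

theorem continuous_clm_apply_of_mem_span {s : Set E} (hs : ∀ y ∈ s, Continuous (T · y))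
    {y : E} (hy : y ∈ Submodule.span 𝕜 s) : Continuous (T · y) := by
  induction hy using Submodule.span_induction with
  | mem y hy => exact hs y hy
  | zero => simpa using continuous_const
  | add y y' _ _ hy hy' => simp only [map_add]; exact hy.add hy'
  | smul c y _ hy => simp only [map_smul]; exact hy.const_smul c

theorem continuous_clm_apply_of_dense (hT : BddAbove (range (‖T ·‖))) {D : Set E} (hD : Dense D)
    (hDc : ∀ y ∈ D, Continuous (T · y)) (y : E) : Continuous (T · y) := by
  have hequi : Equicontinuous ((↑) ∘ T) :=
    ((NormedSpace.equicontinuous_TFAE T).out 7 1).mp hT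
  refine continuous_iff_continuousAt.mpr fun w ↦ ?_
  have hclosed := hequi.isClosed_setOfPred_tendsto (l := 𝓝 w) (T w).continuous
  exact hclosed.closure_subset_iff.mpr (fun y hy ↦ (hDc y hy).continuousAt) (hD y)

theorem Continuous.clm_apply_of_bddAbove (hT : BddAbove (range (‖T ·‖)))
    (hTc : ∀ y, Continuous (T · y)) {A : X → E} (hA : Continuous A) :
    Continuous fun z ↦ T z (A z) := by
  obtain ⟨C, hC⟩ := hT
  refine continuous_iff_continuousAt.mpr fun w ↦ ?_
  have hnear : Tendsto (fun z ↦ T z (A z - A w)) (𝓝 w) (𝓝 0) := by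
    refine squeeze_zero_norm (fun z ↦ (T z).le_of_opNorm_le (hC (mem_range_self z)) _) ?_
    simpa using (hA.tendsto w).sub_const (A w) |>.norm |>.const_mul C
  simpa [ContinuousAt] using hnear.add ((hTc (A w)).tendsto w)

end StrongContinuity

theorem isLinearMap_of_injective_comp {R M N P : Type*} [Semiring R] [AddCommMonoid M]
    [AddCommMonoid N] [AddCommMonoid P] [Module R M] [Module R N] [Module R P]
    {ι : N →ₗ[R] P} (hι : Function.Injective ι) {f : M → N} (g : M →ₗ[R] P)
    (hf : ∀ x, ι (f x) = g x) : IsLinearMap R f :=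
  ⟨fun x y ↦ hι (by simp [hf]), fun c x ↦ hι (by simp [hf])⟩

section CoordinateSpace

variable {E : Type*} [NormedAddCommGroup E] [NormedSpace ℂ E] {ι : E →ₗ[ℂ] (ℤ → ℂ)}

theorem apply_single_eq_smul_of_coord (hι : Function.Injective ι) {e : ℤ → E}
    (he : ∀ k, ι (e k) = Pi.single k 1) {c : ℤ → ℂ} {L : E → E}
    (hL : ∀ x n, ι (L x) n = ι x n * c n) (k : ℤ) : L (e k) = c k • e k :=
  hι <| funext fun n ↦ by
    rw [hL, map_smul, he]
    rcases eq_or_ne n k with rfl | hnk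
    · simp
    · simp [Pi.single_eq_of_ne hnk]

theorem exists_clm_of_coord (hι : Function.Injective ι) {Ψ : ℂ → E → E}
    (hΨ : ∀ z : ℂ, ‖z‖ = 1 → ∀ x : E, ∀ n : ℤ, ι (Ψ z x) n = ι x n * z ^ n)
    (hΨbdd : ∃ C : ℝ, ∀ z : ℂ, ‖z‖ = 1 → ∀ x : E, ‖Ψ z x‖ ≤ C * ‖x‖) :
    ∃ T : {z : ℂ | ‖z‖ = 1} → E →L[ℂ] E, (∀ z, ⇑(T z) = Ψ z) ∧ BddAbove (range (‖T ·‖)) := by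
  obtain ⟨C, hC⟩ := hΨbdd
  have hlin (z : {z : ℂ | ‖z‖ = 1}) : IsLinearMap ℂ (Ψ z) :=
    isLinearMap_of_injective_comp hι (LinearMap.mulRight ℂ (fun n : ℤ ↦ (z : ℂ) ^ n) ∘ₗ ι)
      fun x ↦ funext (hΨ z z.2 x)
  refine ⟨fun z ↦ (hlin z).mk'.mkContinuous C (hC z z.2), fun z ↦ rfl, max C 0, ?_⟩
  rintro _ ⟨z, rfl⟩
  exact LinearMap.mkContinuous_norm_le' _ _

end CoordinateSpace

theorem stmt9_general
    {E : Type*} [NormedAddCommGroup E] [NormedSpace ℂ E]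
    (ι : E →ₗ[ℂ] (ℤ → ℂ)) (hι : Function.Injective ι)
    (e : ℤ → E) (he : ∀ k : ℤ, ι (e k) = Pi.single k 1)
    (hdense : Dense (Submodule.span ℂ (Set.range e) : Set E))
    (Ψ : ℂ → E → E)
    (hΨ : ∀ z : ℂ, ‖z‖ = 1 → ∀ x : E, ∀ n : ℤ, ι (Ψ z x) n = ι x n * z ^ n)
    (hΨbdd : ∃ C : ℝ, ∀ z : ℂ, ‖z‖ = 1 → ∀ x : E, ‖Ψ z x‖ ≤ C * ‖x‖)
    -- `M` is a multiplier on `E`: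
    (M : E →L[ℂ] E) :
    ∀ x : E, ContinuousOn (fun z : ℂ => Ψ z (M (Ψ z⁻¹ x))) {z : ℂ | ‖z‖ = 1} := by
  intro x
  obtain ⟨T, hTΨ, hTbdd⟩ := exists_clm_of_coord hι hΨ hΨbdd
  have hne (z : {z : ℂ | ‖z‖ = 1}) : (z : ℂ) ≠ 0 :=
    norm_ne_zero_iff.mp (z.2.out.trans_ne one_ne_zero)
  have hTe (k : ℤ) : Continuous (T · (e k)) := by
    have hzpow := continuous_subtype_val.zpow₀ k fun z : {z : ℂ | ‖z‖ = 1} ↦ .inl (hne z)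
    refine (hzpow.smul (continuous_const (y := e k))).congr fun z ↦ ?_
    rw [hTΨ, apply_single_eq_smul_of_coord hι he (hΨ z z.2) k]
    rfl
  have hTc : ∀ y, Continuous (T · y) :=
    continuous_clm_apply_of_dense hTbdd hdense fun y hy ↦
      continuous_clm_apply_of_mem_span (forall_mem_range.mpr hTe) hy
  let inv : {z : ℂ | ‖z‖ = 1} → {z : ℂ | ‖z‖ = 1} := fun z ↦ ⟨(z : ℂ)⁻¹, by simpa using z.2.out⟩
  have hinv : Continuous inv := (continuous_subtype_val.inv₀ hne).subtype_mk _
  refine continuousOn_iff_continuous_domRestrict.mpr <|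
    (((hTc x).comp hinv |> M.continuous.comp).clm_apply_of_bddAbove hTbdd hTc).congr fun z ↦ ?_
  simp [inv, hTΨ]

/-- For every `x ∈ E` and every multiplier `M` on `E`, the map
`z ↦ ψ_z(M(ψ_{z⁻¹}(x)))` is continuous from the unit circle `𝕋` into `E`. -/
theorem stmt9
    {E : Type*} [NormedAddCommGroup E] [NormedSpace ℂ E] [CompleteSpace E]
    (ι : E →ₗ[ℂ] (ℤ → ℂ)) (hι : Function.Injective ι)
    (e : ℤ → E) (he : ∀ k : ℤ, ι (e k) = Pi.single k 1)
    (hdense : Dense (Submodule.span ℂ (Set.range e) : Set E))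
    (hcoord : ∀ n : ℤ, Continuous fun x : E => ι x n)
    (Ψ : ℂ → E → E)
    (hΨ : ∀ z : ℂ, ‖z‖ = 1 → ∀ x : E, ∀ n : ℤ, ι (Ψ z x) n = ι x n * z ^ n)
    (hΨbdd : ∃ C : ℝ, ∀ z : ℂ, ‖z‖ = 1 → ∀ x : E, ‖Ψ z x‖ ≤ C * ‖x‖)
    -- `M` is a multiplier on `E`:
    (M : E →L[ℂ] E)
    (hM : ∀ k n : ℤ, ι (M (e (k + 1))) n = ι (M (e k)) (n - 1)) :
    ∀ x : E, ContinuousOn (fun z : ℂ => Ψ z (M (Ψ z⁻¹ x))) {z : ℂ | ‖z‖ = 1} :=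
  stmt9_general ι hι e he hdense Ψ hΨ hΨbdd M
end

section
/- If S is bounded on E but S⁻¹ is not bounded, then every multiplier M on E satisfies M̂(n) = 0 for all n < 0; symmetrically, if S⁻¹ is bounded on E but S is not bounded, then every multiplier M on E satisfies M̂(n) = 0 for all n > 0. -/
/-!
The rotations `ψ_z` are uniformly bounded and act on each `e_k` by the character `z ↦ zᵏ`, so by
density they are strongly continuous in `z`. For a multiplier `M`, the `n`-th coordinate of
`ψ_z M ψ_z⁻¹ e_k` is `M̂(n - k) zⁿ⁻ᵏ`, hence the `m`-th Fourier coefficient of `z ↦ ψ_z M ψ_z⁻¹`,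
a bounded operator on `E`, is `M̂(m) Sᵐ`. Thus `M̂(m) ≠ 0` forces `Sᵐ(E) ⊆ E`; for `m < 0`
composing with a power of `S` gives `S⁻¹(E) ⊆ E`, and symmetrically for `m > 0`.
-/

open MeasureTheory AddCircle

section StrongContinuity

variable {X 𝕜 E F : Type*} [TopologicalSpace X] [NontriviallyNormedField 𝕜]
  [SeminormedAddCommGroup E] [NormedSpace 𝕜 E] [SeminormedAddCommGroup F] [NormedSpace 𝕜 F]
  {R : X → E →L[𝕜] F} {C : ℝ}

theorem continuous_clm_apply_of_dense_span (hC : ∀ x, ‖R x‖ ≤ C) {ι : Type*} {v : ι → E}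
    (hv : Dense (Submodule.span 𝕜 (Set.range v) : Set E))
    (hRv : ∀ i, Continuous fun x => R x (v i)) (u : E) : Continuous fun x => R x u := by
  have hspan : ∀ w ∈ Submodule.span 𝕜 (Set.range v), Continuous fun x => R x w := by
    intro w hw
    induction hw using Submodule.span_induction with
    | mem w hw => obtain ⟨i, rfl⟩ := hw; exact hRv i
    | zero => simpa using continuous_const
    | add w w' _ _ hw hw' => simp only [map_add]; exact hw.add hw'
    | smul c w _ hw => simp only [map_smul]; exact continuous_const.smul hw
  refine continuous_of_uniform_approx_of_continuous fun U hU => ?_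
  obtain ⟨ε, hε, hεU⟩ := Metric.mem_uniformity_dist.1 hU
  obtain ⟨w, hw, huw⟩ := Metric.mem_closure_iff.1 (hv u) (ε / (|C| + 1)) (by positivity)
  refine ⟨fun x => R x w, hspan w hw, fun x => hεU ?_⟩
  calc dist (R x u) (R x w) ≤ ‖R x‖ * dist u w := by
        simpa only [dist_eq_norm, map_sub] using (R x).le_opNorm (u - w)
    _ ≤ |C| * (ε / (|C| + 1)) := by
        gcongr
        exact (hC x).trans (le_abs_self C)
    _ < ε := by
        rw [mul_div_assoc', div_lt_iff₀ (by positivity)]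
        nlinarith [abs_nonneg C]

theorem continuous_clm_apply_of_norm_le (hC : ∀ x, ‖R x‖ ≤ C)
    (hR : ∀ u, Continuous fun x => R x u) {w : X → E} (hw : Continuous w) :
    Continuous fun x => R x (w x) := by
  refine continuous_iff_continuousAt.2 fun x₀ =>
    continuousAt_of_locally_uniform_approx_of_continuousAt fun U hU => ?_
  obtain ⟨ε, hε, hεU⟩ := Metric.mem_uniformity_dist.1 hU
  refine ⟨{x | dist (w x) (w x₀) < ε / (|C| + 1)}, ?_, fun x => R x (w x₀),
    (hR (w x₀)).continuousAt, fun x hx => hεU ?_⟩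
  · exact hw.continuousAt.preimage_mem_nhds (Metric.ball_mem_nhds _ (by positivity))
  calc dist (R x (w x)) (R x (w x₀)) ≤ ‖R x‖ * dist (w x) (w x₀) := by
        simpa only [dist_eq_norm, map_sub] using (R x).le_opNorm (w x - w x₀)
    _ ≤ |C| * (ε / (|C| + 1)) := by
        gcongr
        · exact (hC x).trans (le_abs_self C)
        · exact le_of_lt hx
    _ < ε := by
        rw [mul_div_assoc', div_lt_iff₀ (by positivity)]
        nlinarith [abs_nonneg C]

end StrongContinuity

section FourierCoeff

theorem Continuous.integrable_haarAddCircle {T : ℝ} [Fact (0 < T)] {E : Type*}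
    [NormedAddCommGroup E] {f : AddCircle T → E} (hf : Continuous f) :
    Integrable f haarAddCircle :=
  hf.integrable_of_hasCompactSupport (.of_compactSpace _)

variable {T : ℝ} [Fact (0 < T)] {E F : Type*} [NormedAddCommGroup E] [NormedSpace ℂ E]
  [NormedAddCommGroup F] [NormedSpace ℂ F]

theorem ContinuousLinearMap.map_fourierCoeff [CompleteSpace E] [CompleteSpace F] (L : E →L[ℂ] F)
    {f : AddCircle T → E} (hf : Integrable f haarAddCircle) (n : ℤ) :
    L (fourierCoeff f n) = fourierCoeff (fun θ => L (f θ)) n := by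
  simp only [fourierCoeff, ← L.integral_comp_comm (hf.fourier_smul _), map_smul]

theorem exists_clm_eq_fourierCoeff {R : AddCircle T → E →L[ℂ] F} {C : ℝ} (hC : ∀ θ, ‖R θ‖ ≤ C)
    (hR : ∀ x, Continuous fun θ => R θ x) (m : ℤ) :
    ∃ A : E →L[ℂ] F, ∀ x, A x = fourierCoeff (fun θ => R θ x) m := by
  have hint : ∀ x, Integrable (fun θ => R θ x) haarAddCircle := fun x =>
    (hR x).integrable_haarAddCircle
  let A : E →ₗ[ℂ] F :=
    { toFun := fun x => fourierCoeff (fun θ => R θ x) m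
      map_add' := fun x y => by
        simp only [map_add]
        exact congrFun (fourierCoeff.add (hint x) (hint y)) m
      map_smul' := fun c x => by
        simp only [map_smul]
        exact fourierCoeff.const_smul _ c m }
  refine ⟨A.mkContinuous C fun x => ?_, fun x => rfl⟩
  calc ‖fourierCoeff (fun θ => R θ x) m‖ ≤ C * ‖x‖ * haarAddCircle.real Set.univ := by
        refine norm_integral_le_of_norm_le_const (ae_of_all _ fun θ => ?_)
        rw [norm_smul, fourier_apply, Circle.norm_coe, one_mul]
        exact (R θ).le_of_opNorm_le (hC θ) x
    _ = C * ‖x‖ := by simp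

end FourierCoeff

section Shifts

variable {E α : Type*}

/-- The exponents `j` with `Sʲ(E) ⊆ E`, for `E` embedded in `ℤ → α` by `ι`. -/
def shiftSubmonoid (ι : E → ℤ → α) : AddSubmonoid ℤ where
  carrier := {j | ∀ x, ∃ y, ∀ n, ι y n = ι x (n - j)}
  zero_mem' x := ⟨x, fun n => by rw [sub_zero]⟩
  add_mem' {i j} hi hj x := by
    obtain ⟨y, hy⟩ := hi x
    obtain ⟨z, hz⟩ := hj y
    exact ⟨z, fun n => by rw [hz, hy, sub_sub, add_comm]⟩

theorem mem_shiftSubmonoid {ι : E → ℤ → α} {j : ℤ} :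
    j ∈ shiftSubmonoid ι ↔ ∀ x, ∃ y, ∀ n, ι y n = ι x (n - j) :=
  Iff.rfl

theorem neg_one_mem_shiftSubmonoid {ι : E → ℤ → α} :
    -1 ∈ shiftSubmonoid ι ↔ ∀ x, ∃ y, ∀ n, ι y n = ι x (n + 1) := by
  simp only [mem_shiftSubmonoid, sub_neg_eq_add]

end Shifts

namespace AddSubmonoid

variable {S : AddSubmonoid ℤ} {m : ℤ}

theorem neg_one_mem_of_neg_mem (h : 1 ∈ S) (hm : m ∈ S) (hm0 : m < 0) : -1 ∈ S := by
  have := add_mem hm (nsmul_mem h (-1 - m).toNat)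
  rwa [nsmul_one, Int.toNat_of_nonneg (by omega), add_sub_cancel] at this

theorem one_mem_of_pos_mem (h : -1 ∈ S) (hm : m ∈ S) (hm0 : 0 < m) : 1 ∈ S := by
  have := add_mem hm (nsmul_mem h (m - 1).toNat)
  rwa [nsmul_eq_mul, mul_neg_one, Int.toNat_of_nonneg (by omega), neg_sub, add_sub_cancel] at this

end AddSubmonoid

section CircleAction

variable {E : Type*} [NormedAddCommGroup E] [NormedSpace ℂ E] {ι : E →ₗ[ℂ] (ℤ → ℂ)}
  {T : ℝ}

theorem exists_circleAction (hι : Function.Injective ι) (Ψ : ℂ → E → E)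
    (hΨ : ∀ z : ℂ, ‖z‖ = 1 → ∀ x : E, ∀ n : ℤ, ι (Ψ z x) n = ι x n * z ^ n)
    (hΨbdd : ∃ C : ℝ, ∀ z : ℂ, ‖z‖ = 1 → ∀ x : E, ‖Ψ z x‖ ≤ C * ‖x‖) :
    ∃ ρ : AddCircle T → E →L[ℂ] E, ∃ C : ℝ, (∀ θ, ‖ρ θ‖ ≤ C) ∧
      ∀ θ x n, ι (ρ θ x) n = fourier n θ * ι x n := by
  obtain ⟨C, hC⟩ := hΨbdd
  have hz : ∀ θ : AddCircle T, ‖(toCircle θ : ℂ)‖ = 1 := fun θ => Circle.norm_coe _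
  let ρ (θ : AddCircle T) : E →ₗ[ℂ] E :=
    { toFun := Ψ (toCircle θ)
      map_add' := fun x y => hι <| funext fun n => by
        simp only [hΨ _ (hz θ), map_add, Pi.add_apply, add_mul]
      map_smul' := fun c x => hι <| funext fun n => by
        simp only [hΨ _ (hz θ), map_smul, Pi.smul_apply, smul_eq_mul, RingHom.id_apply, mul_assoc] }
  refine ⟨fun θ => (ρ θ).mkContinuous C (hC _ (hz θ)), max C 0,
    fun θ => LinearMap.mkContinuous_norm_le' _ _, fun θ x n => ?_⟩
  change ι (Ψ (toCircle θ) x) n = _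
  rw [hΨ _ (hz θ), fourier_apply, toCircle_zsmul, Circle.coe_zpow, mul_comm]

variable {e : ℤ → E} {ρ : AddCircle T → E →L[ℂ] E}

theorem circleAction_apply_single (hι : Function.Injective ι)
    (he : ∀ k : ℤ, ι (e k) = Pi.single k 1)
    (hρ : ∀ θ x n, ι (ρ θ x) n = fourier n θ * ι x n) (θ : AddCircle T) (k : ℤ) :
    ρ θ (e k) = fourier k θ • e k := hι <| funext fun n => by
  rcases eq_or_ne n k with rfl | hnk
  · simp [hρ, he]
  · simp [hρ, he, hnk]

theorem continuous_circleAction_apply (hι : Function.Injective ι)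
    (he : ∀ k : ℤ, ι (e k) = Pi.single k 1)
    (hdense : Dense (Submodule.span ℂ (Set.range e) : Set E))
    (hρ : ∀ θ x n, ι (ρ θ x) n = fourier n θ * ι x n) {C : ℝ} (hC : ∀ θ, ‖ρ θ‖ ≤ C) (x : E) :
    Continuous fun θ => ρ θ x :=
  continuous_clm_apply_of_dense_span hC hdense (fun k => by
    simp only [circleAction_apply_single hι he hρ]
    exact (fourier k).continuous.smul continuous_const) x

end CircleAction

section Multiplier

variable {E : Type*} [NormedAddCommGroup E] [NormedSpace ℂ E] {ι : E →ₗ[ℂ] (ℤ → ℂ)} {e : ℤ → E}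
  {T : ℝ} {ρ : AddCircle T → E →L[ℂ] E} {M : E →L[ℂ] E}

theorem multiplier_apply_single (hM : ∀ k n : ℤ, ι (M (e (k + 1))) n = ι (M (e k)) (n - 1))
    (k n : ℤ) : ι (M (e k)) n = ι (M (e 0)) (n - k) := by
  induction k using Int.induction_on generalizing n with
  | zero => rw [sub_zero]
  | succ k ih => rw [hM, ih, sub_sub, add_comm 1]
  | pred k ih =>
    rw [← add_sub_cancel_right n 1, ← hM, sub_add_cancel, ih]
    ring_nf

theorem multiplier_conj_apply_single (hι : Function.Injective ι)
    (he : ∀ k : ℤ, ι (e k) = Pi.single k 1)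
    (hρ : ∀ θ x n, ι (ρ θ x) n = fourier n θ * ι x n)
    (hM : ∀ k n : ℤ, ι (M (e (k + 1))) n = ι (M (e k)) (n - 1)) (θ : AddCircle T) (k n : ℤ) :
    ι (ρ θ (M (ρ (-θ) (e k)))) n = ι (M (e 0)) (n - k) * fourier (n - k) θ := by
  have hneg : fourier k (-θ) = fourier (-k) θ := by simp only [fourier_apply, smul_neg, neg_smul]
  rw [hρ, circleAction_apply_single hι he hρ, map_smul, map_smul, Pi.smul_apply, smul_eq_mul,
    multiplier_apply_single hM, hneg, sub_eq_add_neg, fourier_add]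
  ring

theorem exists_clm_apply_eq_coeff_mul_shift [Fact (0 < T)] [CompleteSpace E]
    (hι : Function.Injective ι) (he : ∀ k : ℤ, ι (e k) = Pi.single k 1)
    (hdense : Dense (Submodule.span ℂ (Set.range e) : Set E))
    (hcoord : ∀ n : ℤ, Continuous fun x : E => ι x n)
    (hρ : ∀ θ x n, ι (ρ θ x) n = fourier n θ * ι x n) {C : ℝ} (hC : ∀ θ, ‖ρ θ‖ ≤ C)
    (hM : ∀ k n : ℤ, ι (M (e (k + 1))) n = ι (M (e k)) (n - 1)) (m : ℤ) :
    ∃ A : E →L[ℂ] E, ∀ x n, ι (A x) n = ι (M (e 0)) m * ι x (n - m) := by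
  have hρc := continuous_circleAction_apply hι he hdense hρ hC
  have hRC : ∀ θ, ‖(ρ θ).comp (M.comp (ρ (-θ)))‖ ≤ C * (‖M‖ * C) := fun θ => by
    have hC0 : 0 ≤ C := (norm_nonneg _).trans (hC θ)
    calc _ ≤ ‖ρ θ‖ * (‖M‖ * ‖ρ (-θ)‖) :=
          (ContinuousLinearMap.opNorm_comp_le _ _).trans
            (by gcongr; exact ContinuousLinearMap.opNorm_comp_le _ _)
      _ ≤ _ := by gcongr <;> exact hC _
  have hR : ∀ x, Continuous fun θ => ρ θ (M (ρ (-θ) x)) := fun x =>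
    continuous_clm_apply_of_norm_le hC hρc (M.continuous.comp ((hρc x).comp continuous_neg))
  obtain ⟨A, hA⟩ : ∃ A : E →L[ℂ] E, ∀ x, A x = fourierCoeff (fun θ => ρ θ (M (ρ (-θ) x))) m :=
    exists_clm_eq_fourierCoeff hRC hR m
  refine ⟨A, fun x n => ?_⟩
  let coord (j : ℤ) : E →L[ℂ] ℂ := ⟨(LinearMap.proj j).comp ι, hcoord j⟩
  suffices (coord n).comp A = ι (M (e 0)) m • coord (n - m) from congr($this x)
  refine ContinuousLinearMap.ext_on hdense ?_
  rintro _ ⟨k, rfl⟩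
  change coord n (A (e k)) = ι (M (e 0)) m * ι (e k) (n - m)
  rw [hA, (coord n).map_fourierCoeff (hR (e k)).integrable_haarAddCircle]
  change fourierCoeff (fun θ => ι (ρ θ (M (ρ (-θ) (e k)))) n) m = _
  simp only [multiplier_conj_apply_single hι he hρ hM]
  rw [fourierCoeff.const_mul, fourierCoeff_fourier, he, Pi.single_apply, Pi.single_apply]
  rcases eq_or_ne m (n - k) with h | h
  · simp [h]
  · simp [h, show n - m ≠ k by omega]

theorem mem_shiftSubmonoid_of_multiplier [Fact (0 < T)] [CompleteSpace E]
    (hι : Function.Injective ι) (he : ∀ k : ℤ, ι (e k) = Pi.single k 1)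
    (hdense : Dense (Submodule.span ℂ (Set.range e) : Set E))
    (hcoord : ∀ n : ℤ, Continuous fun x : E => ι x n)
    (hρ : ∀ θ x n, ι (ρ θ x) n = fourier n θ * ι x n) {C : ℝ} (hC : ∀ θ, ‖ρ θ‖ ≤ C)
    (hM : ∀ k n : ℤ, ι (M (e (k + 1))) n = ι (M (e k)) (n - 1)) {m : ℤ}
    (hm : ι (M (e 0)) m ≠ 0) : m ∈ shiftSubmonoid ι := by
  obtain ⟨A, hA⟩ := exists_clm_apply_eq_coeff_mul_shift hι he hdense hcoord hρ hC hM m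
  exact fun x => ⟨(ι (M (e 0)) m)⁻¹ • A x, fun n => by
    rw [map_smul, Pi.smul_apply, hA, smul_eq_mul, inv_mul_cancel_left₀ hm]⟩

end Multiplier

/-- If `S` is bounded on `E` but `S⁻¹` is not, then every multiplier `M` satisfies
`M̂(n) = 0` for `n < 0`; symmetrically, if `S⁻¹` is bounded but `S` is not, then
`M̂(n) = 0` for `n > 0`. -/
theorem stmt11
    {E : Type*} [NormedAddCommGroup E] [NormedSpace ℂ E] [CompleteSpace E]
    (ι : E →ₗ[ℂ] (ℤ → ℂ)) (hι : Function.Injective ι)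
    (e : ℤ → E) (he : ∀ k : ℤ, ι (e k) = Pi.single k 1)
    (hdense : Dense (Submodule.span ℂ (Set.range e) : Set E))
    (hcoord : ∀ n : ℤ, Continuous fun x : E => ι x n)
    (Ψ : ℂ → E → E)
    (hΨ : ∀ z : ℂ, ‖z‖ = 1 → ∀ x : E, ∀ n : ℤ, ι (Ψ z x) n = ι x n * z ^ n)
    (hΨbdd : ∃ C : ℝ, ∀ z : ℂ, ‖z‖ = 1 → ∀ x : E, ‖Ψ z x‖ ≤ C * ‖x‖)
    -- `M` is a multiplier on `E`:
    (M : E →L[ℂ] E)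
    (hM : ∀ k n : ℤ, ι (M (e (k + 1))) n = ι (M (e k)) (n - 1)) :
    -- if `S` is bounded but `S⁻¹` is not bounded, then `M̂(n) = 0` for `n < 0`:
    ((∀ x : E, ∃ y : E, ∀ n : ℤ, ι y n = ι x (n - 1)) →
      (¬ ∀ x : E, ∃ y : E, ∀ n : ℤ, ι y n = ι x (n + 1)) →
      ∀ n : ℤ, n < 0 → ι (M (e 0)) n = 0) ∧
    -- if `S⁻¹` is bounded but `S` is not bounded, then `M̂(n) = 0` for `n > 0`:
    ((∀ x : E, ∃ y : E, ∀ n : ℤ, ι y n = ι x (n + 1)) →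
      (¬ ∀ x : E, ∃ y : E, ∀ n : ℤ, ι y n = ι x (n - 1)) →
      ∀ n : ℤ, 0 < n → ι (M (e 0)) n = 0) := by
  obtain ⟨ρ, C, hC, hρ⟩ := exists_circleAction (T := 1) hι Ψ hΨ hΨbdd
  have hshift : ∀ m, ι (M (e 0)) m ≠ 0 → m ∈ shiftSubmonoid ι := fun m =>
    mem_shiftSubmonoid_of_multiplier hι he hdense hcoord hρ hC hM
  rw [← neg_one_mem_shiftSubmonoid]
  refine ⟨fun hS hS' m hm => ?_, fun hS hS' m hm => ?_⟩ <;> by_contra hMm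
  · exact hS' (AddSubmonoid.neg_one_mem_of_neg_mem hS (hshift m hMm) hm)
  · exact hS' (AddSubmonoid.one_mem_of_pos_mem hS (hshift m hMm) hm)
end

section
/- Assume S and S⁻¹ are both bounded on E. Let φ ∈ F(ℤ) be such that φ ∗ x ∈ E for every x ∈ E, and let M_φ : E → E be the (bounded) operator x ↦ φ ∗ x. Then |φ̃(z)| ≤ ‖M_φ‖ for every z ∈ ℂ with 1/ρ(S⁻¹) ≤ |z| ≤ ρ(S), where φ̃(z) = Σ_n φ(n) zⁿ (a finite sum). -/
/-!
Conjugating the shift by the multipliers `ψ_ω` (`|ω| = 1`) turns `S` into `ω S`, so `σ(S)` is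
invariant under rotations and therefore contains the whole circles `|z| = ρ(S)` and, since
`σ(S⁻¹) = σ(S)⁻¹`, `|z| = 1 / ρ(S⁻¹)`. As `M_φ = φ̃(S)` for the Laurent polynomial `φ̃`, the
spectral mapping theorem gives `φ̃(σ(S)) ⊆ σ(M_φ)`, hence `|φ̃| ≤ ‖M_φ‖` on both circles, and the
maximum modulus principle on the annulus between them finishes the proof.
-/

open scoped ENNReal NNReal Pointwise

def IsRotationInvariant (s : Set ℂ) : Prop :=
  ∀ ω : ℂ, ‖ω‖ = 1 → ∀ w ∈ s, ω * w ∈ s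

theorem IsRotationInvariant.inv {s : Set ℂ} (hs : IsRotationInvariant s) :
    IsRotationInvariant s⁻¹ := by
  intro ω hω w hw
  have hω' : ‖ω⁻¹‖ = 1 := by rw [norm_inv, hω, inv_one]
  simpa [Set.mem_inv, mul_inv, mul_comm] using hs ω⁻¹ hω' w⁻¹ hw

theorem isRotationInvariant_spectrum_of_conj {A : Type*} [Ring A] [Algebra ℂ A] {a : A}
    (h : ∀ ω : ℂ, ‖ω‖ = 1 → ∃ v : Aˣ, ↑v * a * ↑v⁻¹ = ω • a) :
    IsRotationInvariant (spectrum ℂ a) := by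
  intro ω hω w hw
  have hω0 : ω ≠ 0 := by rintro rfl; simp at hω
  obtain ⟨v, hv⟩ := h ω hω
  have hrot : spectrum ℂ (ω • a) = ω • spectrum ℂ a :=
    spectrum.unit_smul_eq_smul a (Units.mk0 ω hω0)
  rw [← spectrum.units_conjugate (u := v), hv, hrot]
  exact Set.smul_mem_smul_set hw

theorem IsRotationInvariant.mem_spectrum_of_nnnorm_eq_spectralRadius {A : Type*} [NormedRing A]
    [NormedAlgebra ℂ A] [CompleteSpace A] [Nontrivial A] {a : A}
    (ha : IsRotationInvariant (spectrum ℂ a)) {w : ℂ}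
    (hw : (‖w‖₊ : ℝ≥0∞) = spectralRadius ℂ a) : w ∈ spectrum ℂ a := by
  obtain ⟨w₀, hw₀, hρ⟩ := spectrum.exists_nnnorm_eq_spectralRadius a
  have hnorm : ‖w‖ = ‖w₀‖ := by
    rw [← coe_nnnorm, ← coe_nnnorm, ← ENNReal.coe_inj.mp (hw.trans hρ.symm)]
  rcases eq_or_ne w₀ 0 with rfl | hw₀0
  · rwa [norm_eq_zero.mp (hnorm.trans norm_zero)]
  have := ha (w / w₀) (by rw [norm_div, hnorm, div_self (norm_ne_zero_iff.mpr hw₀0)]) w₀ hw₀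
  rwa [div_mul_cancel₀ w hw₀0] at this

theorem pow_toNat_add_natCast {G : Type*} [Group G] (g : G) {n : ℤ} {N : ℕ} (h : 0 ≤ n + N) :
    g ^ (n + N).toNat = g ^ N * g ^ n := by
  rw [← zpow_natCast, Int.toNat_of_nonneg h, add_comm, zpow_add, zpow_natCast]

open Polynomial in
theorem spectrum.sum_mul_zpow_mem {𝕜 A : Type*} [Field 𝕜] [Ring A] [Algebra 𝕜 A] (u : Aˣ)
    (φ : ℤ →₀ 𝕜) {w : 𝕜} (hw : w ∈ spectrum 𝕜 (u : A)) :
    ∑ n ∈ φ.support, φ n * w ^ n ∈ spectrum 𝕜 (∑ n ∈ φ.support, φ n • ((u ^ n : Aˣ) : A)) := by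
  have hw0 : w ≠ 0 := by rintro rfl; exact spectrum.zero_notMem_iff 𝕜 |>.mpr u.isUnit hw
  obtain ⟨N, hN⟩ : ∃ N : ℕ, ∀ n ∈ φ.support, 0 ≤ n + N :=
    ⟨φ.support.sup Int.natAbs, fun n hn => by
      have : n.natAbs ≤ φ.support.sup Int.natAbs := Finset.le_sup hn
      omega⟩
  -- `X ^ N` times the Laurent polynomial `∑ φ n X ^ n` is a genuine polynomial
  set p : 𝕜[X] := ∑ n ∈ φ.support, C (φ n) * X ^ (n + N).toNat
  have hp_eval : p.eval w = (∑ n ∈ φ.support, φ n * w ^ n) * w ^ N := by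
    simp only [p, eval_finsetSum, eval_mul, eval_C, eval_pow, eval_X, Finset.sum_mul, mul_assoc]
    refine Finset.sum_congr rfl fun n hn => ?_
    rw [← Units.val_mk0 hw0, ← Units.val_pow_eq_pow_val, pow_toNat_add_natCast _ (hN n hn)]
    simp [mul_comm]
  have hp_aeval : aeval (u : A) p = ↑(u ^ N) * ∑ n ∈ φ.support, φ n • ((u ^ n : Aˣ) : A) := by
    simp only [p, map_sum, map_mul, aeval_C, aeval_X_pow, Finset.mul_sum, ← Algebra.smul_def,
      mul_smul_comm]
    refine Finset.sum_congr rfl fun n hn => ?_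
    rw [← Units.val_pow_eq_pow_val, pow_toNat_add_natCast _ (hN n hn), Units.val_mul]
  set f := ∑ n ∈ φ.support, φ n * w ^ n
  set m := ∑ n ∈ φ.support, φ n • ((u ^ n : Aˣ) : A)
  have hq : ¬IsUnit (aeval (u : A) (p - C f * X ^ N)) := by
    have hroot : (p - C f * X ^ N).eval w = 0 := by
      rw [eval_sub, hp_eval, eval_mul, eval_C, eval_pow, eval_X, sub_self]
    rw [← spectrum.zero_mem_iff 𝕜, ← hroot]
    exact spectrum.subset_polynomial_aeval (u : A) _ ⟨w, hw, rfl⟩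
  have hfactor : aeval (u : A) (p - C f * X ^ N) = -(↑(u ^ N) * (algebraMap 𝕜 A f - m)) := by
    rw [map_sub, hp_aeval, map_mul, aeval_C, aeval_X_pow, mul_sub, ← Units.val_pow_eq_pow_val,
      Algebra.commutes]
    abel
  rw [spectrum.mem_iff]
  exact fun hunit => hq (hfactor ▸ ((u ^ N).isUnit.mul hunit).neg)

theorem Complex.norm_le_on_annulus_of_le_on_boundary {F : Type*} [NormedAddCommGroup F]
    [NormedSpace ℂ F] {f : ℂ → F} (hf : ∀ w ≠ 0, DifferentiableAt ℂ f w) {r₁ r₂ C : ℝ}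
    (hr₁ : 0 < r₁) (hC : ∀ w : ℂ, ‖w‖ = r₁ ∨ ‖w‖ = r₂ → ‖f w‖ ≤ C) {z : ℂ} (hz₁ : r₁ ≤ ‖z‖)
    (hz₂ : ‖z‖ ≤ r₂) : ‖f z‖ ≤ C := by
  rcases hz₁.eq_or_lt with h | hz₁; · exact hC z (.inl h.symm)
  rcases hz₂.eq_or_lt with h | hz₂; · exact hC z (.inr h)
  set U : Set ℂ := norm ⁻¹' Set.Ioo r₁ r₂
  have hU : IsOpen U := isOpen_Ioo.preimage continuous_norm
  have hUcl : closure U ⊆ norm ⁻¹' Set.Icc r₁ r₂ :=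
    closure_minimal (Set.preimage_mono Set.Ioo_subset_Icc_self)
      (isClosed_Icc.preimage continuous_norm)
  have hUbdd : Bornology.IsBounded U :=
    (Metric.isBounded_closedBall (x := (0 : ℂ)) (r := r₂)).subset fun w hw => by
      simpa using hw.2.le
  have hdiff : DiffContOnCl ℂ f U := DifferentiableOn.diffContOnCl fun w hw =>
    (hf w (norm_pos_iff.mp (hr₁.trans_le (hUcl hw).1))).differentiableWithinAt
  refine Complex.norm_le_of_forall_mem_frontier_norm_le hUbdd hdiff (fun w hw => hC w ?_)
    (subset_closure ⟨hz₁, hz₂⟩)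
  rw [frontier, hU.interior_eq] at hw
  obtain ⟨⟨h₁, h₂⟩, hw⟩ := And.imp_left (@hUcl w) hw
  by_contra! h
  exact hw ⟨h₁.lt_of_ne h.1.symm, h₂.lt_of_ne h.2⟩

theorem norm_sum_mul_zpow_le_of_isRotationInvariant {A : Type*} [NormedRing A] [NormedAlgebra ℂ A]
    [CompleteSpace A] [NormOneClass A] (u : Aˣ) (hu : IsRotationInvariant (spectrum ℂ (u : A)))
    (φ : ℤ →₀ ℂ) {z : ℂ} (hz₁ : (spectralRadius ℂ (↑u⁻¹ : A))⁻¹ ≤ ‖z‖₊)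
    (hz₂ : ‖z‖₊ ≤ spectralRadius ℂ (u : A)) :
    ‖∑ n ∈ φ.support, φ n * z ^ n‖ ≤ ‖∑ n ∈ φ.support, φ n • ((u ^ n : Aˣ) : A)‖ := by
  have : Nontrivial A := NormOneClass.nontrivial
  have hbound : ∀ w ∈ spectrum ℂ (u : A), ‖∑ n ∈ φ.support, φ n * w ^ n‖ ≤
      ‖∑ n ∈ φ.support, φ n • ((u ^ n : Aˣ) : A)‖ :=
    fun w hw => spectrum.norm_le_norm_of_mem (spectrum.sum_mul_zpow_mem u φ hw)
  have spectralRadius_ne_top (a : A) : spectralRadius ℂ a ≠ ⊤ :=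
    ne_top_of_le_ne_top ENNReal.coe_ne_top (spectrum.spectralRadius_le_nnnorm a)
  lift spectralRadius ℂ (u : A) to ℝ≥0 using spectralRadius_ne_top _ with ρ hρ
  lift spectralRadius ℂ (↑u⁻¹ : A) to ℝ≥0 using spectralRadius_ne_top _ with ρ' hρ'
  have hρ'0 : ρ' ≠ 0 := by rintro rfl; simp at hz₁
  rw [← ENNReal.coe_inv hρ'0, ENNReal.coe_le_coe] at hz₁
  rw [ENNReal.coe_le_coe] at hz₂
  refine Complex.norm_le_on_annulus_of_le_on_boundary
    (f := fun w => ∑ n ∈ φ.support, φ n * w ^ n) (r₁ := ρ'⁻¹) (r₂ := ρ)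
    (fun w hw => by fun_prop (disch := exact .inl hw)) (by positivity) ?_ hz₁ hz₂
  rintro w (hw | hw)
  · have hinv : IsRotationInvariant (spectrum ℂ (↑u⁻¹ : A)) :=
      spectrum.map_inv (𝕜 := ℂ) u ▸ hu.inv
    have key : w⁻¹ ∈ spectrum ℂ (↑u⁻¹ : A) := by
      refine hinv.mem_spectrum_of_nnnorm_eq_spectralRadius ?_
      rw [← hρ', nnnorm_inv, (NNReal.eq hw : ‖w‖₊ = ρ'⁻¹), inv_inv]
    rw [← spectrum.map_inv (𝕜 := ℂ), Set.mem_inv, inv_inv] at key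
    exact hbound w key
  · refine hbound w (hu.mem_spectrum_of_nnnorm_eq_spectralRadius ?_)
    rw [← hρ, (NNReal.eq hw : ‖w‖₊ = ρ)]

section SequenceSpace

variable {E : Type*} [NormedAddCommGroup E] [NormedSpace ℂ E] {ι : E →ₗ[ℂ] (ℤ → ℂ)}

theorem ContinuousLinearMap.ext_of_injective_coord (hι : Function.Injective ι)
    {A B : E →L[ℂ] E} (h : ∀ x n, ι (A x) n = ι (B x) n) : A = B :=
  ContinuousLinearMap.ext fun x => hι (funext (h x))

theorem coord_zpow_of_coord_shift (u : (E →L[ℂ] E)ˣ)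
    (hu : ∀ x n, ι ((u : E →L[ℂ] E) x) n = ι x (n - 1)) (k : ℤ) (x : E) (n : ℤ) :
    ι ((↑(u ^ k) : E →L[ℂ] E) x) n = ι x (n - k) := by
  have hu' : ∀ x n, ι ((↑u⁻¹ : E →L[ℂ] E) x) n = ι x (n + 1) := fun x n => by
    have := hu ((↑u⁻¹ : E →L[ℂ] E) x) (n + 1)
    rwa [← mul_apply_eq_comp, Units.mul_inv, one_apply_eq_self, add_sub_cancel_right,
      eq_comm] at this
  induction k generalizing x n with
  | zero => simp
  | succ k ih => rw [zpow_add_one, Units.val_mul, mul_apply_eq_comp, ih, hu]; ring_nf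
  | pred k ih => rw [zpow_sub_one, Units.val_mul, mul_apply_eq_comp, ih, hu']; ring_nf

theorem exists_clm_coord_mul (hι : Function.Injective ι) {c : ℤ → ℂ} {f : E → E}
    (hf : ∀ x n, ι (f x) n = ι x n * c n) {C : ℝ} (hC : ∀ x, ‖f x‖ ≤ C * ‖x‖) :
    ∃ P : E →L[ℂ] E, ∀ x n, ι (P x) n = ι x n * c n := by
  let P : E →ₗ[ℂ] E :=
    { toFun := f
      map_add' := fun x y => hι <| funext fun n => by simp [hf, add_mul]
      map_smul' := fun a x => hι <| funext fun n => by simp [hf, mul_assoc] }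
  exact ⟨P.mkContinuous C hC, hf⟩

theorem exists_unit_coord_mul (hι : Function.Injective ι)
    (hmul : ∀ ω : ℂ, ‖ω‖ = 1 → ∃ P : E →L[ℂ] E, ∀ x n, ι (P x) n = ι x n * ω ^ n) {ω : ℂ}
    (hω : ‖ω‖ = 1) : ∃ v : (E →L[ℂ] E)ˣ, ∀ x n, ι ((v : E →L[ℂ] E) x) n = ι x n * ω ^ n := by
  have hω0 : ω ≠ 0 := by rintro rfl; simp at hω
  obtain ⟨P, hP⟩ := hmul ω hω
  obtain ⟨Q, hQ⟩ := hmul ω⁻¹ (by rw [norm_inv, hω, inv_one])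
  have hPQ : P * Q = 1 := ContinuousLinearMap.ext_of_injective_coord hι fun x n => by
    simp [mul_apply_eq_comp, hP, hQ, zpow_ne_zero n hω0]
  have hQP : Q * P = 1 := ContinuousLinearMap.ext_of_injective_coord hι fun x n => by
    simp [mul_apply_eq_comp, hP, hQ, zpow_ne_zero n hω0]
  exact ⟨⟨P, Q, hPQ, hQP⟩, hP⟩

theorem isRotationInvariant_spectrum_of_coord_shift (hι : Function.Injective ι)
    (hmul : ∀ ω : ℂ, ‖ω‖ = 1 → ∃ P : E →L[ℂ] E, ∀ x n, ι (P x) n = ι x n * ω ^ n)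
    {S : E →L[ℂ] E} (hS : ∀ x n, ι (S x) n = ι x (n - 1)) :
    IsRotationInvariant (spectrum ℂ S) := by
  refine isRotationInvariant_spectrum_of_conj fun ω hω => ?_
  have hω0 : ω ≠ 0 := by rintro rfl; simp at hω
  obtain ⟨v, hv⟩ := exists_unit_coord_mul hι hmul hω
  refine ⟨v, (Units.mul_inv_eq_iff_eq_mul v).mpr ?_⟩
  refine ContinuousLinearMap.ext_of_injective_coord hι fun x n => ?_
  simp only [mul_apply_eq_comp, smul_apply, map_smul, Pi.smul_apply, hv, hS, smul_eq_mul,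
    zpow_sub_one₀ hω0]
  field_simp

end SequenceSpace

theorem stmt12_general
    {E : Type*} [NormedAddCommGroup E] [NormedSpace ℂ E] [CompleteSpace E]
    (ι : E →ₗ[ℂ] (ℤ → ℂ)) (hι : Function.Injective ι)
    (Ψ : ℂ → E → E)
    (hΨ : ∀ z : ℂ, ‖z‖ = 1 → ∀ x : E, ∀ n : ℤ, ι (Ψ z x) n = ι x n * z ^ n)
    (hΨbdd : ∃ C : ℝ, ∀ z : ℂ, ‖z‖ = 1 → ∀ x : E, ‖Ψ z x‖ ≤ C * ‖x‖)
    -- `S` and `S⁻¹` are both bounded, with restrictions `Sop` and `Top` to `E`: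
    (Sop Top : E →L[ℂ] E)
    (hSop : ∀ x : E, ∀ n : ℤ, ι (Sop x) n = ι x (n - 1))
    (hTop : ∀ x : E, ∀ n : ℤ, ι (Top x) n = ι x (n + 1))
    -- `φ` is a finite sequence and `M_φ` is the operator of convolution with `φ`:
    (φ : ℤ →₀ ℂ) (Mφ : E →L[ℂ] E)
    (hMφ : ∀ x : E, ∀ m : ℤ, ι (Mφ x) m = ∑ n ∈ φ.support, φ n * ι x (m - n)) :
    ∀ z : ℂ, (spectralRadius ℂ Top)⁻¹ ≤ (‖z‖₊ : ℝ≥0∞) →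
      (‖z‖₊ : ℝ≥0∞) ≤ spectralRadius ℂ Sop →
      ‖∑ n ∈ φ.support, φ n * z ^ n‖ ≤ ‖Mφ‖ := by
  intro z hz₁ hz₂
  have hST : Sop * Top = 1 := ContinuousLinearMap.ext_of_injective_coord hι fun x n => by
    simp [mul_apply_eq_comp, hSop, hTop]
  have hTS : Top * Sop = 1 := ContinuousLinearMap.ext_of_injective_coord hι fun x n => by
    simp [mul_apply_eq_comp, hSop, hTop]
  let u : (E →L[ℂ] E)ˣ := ⟨Sop, Top, hST, hTS⟩
  have : Nontrivial E := by
    by_contra hE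
    rw [not_nontrivial_iff_subsingleton] at hE
    simp [spectralRadius, spectrum.of_subsingleton] at hz₁
  have hMφ_eq : Mφ = ∑ n ∈ φ.support, φ n • ((u ^ n : (E →L[ℂ] E)ˣ) : E →L[ℂ] E) :=
    ContinuousLinearMap.ext_of_injective_coord hι fun x m => by
      simp [hMφ, coord_zpow_of_coord_shift u hSop]
  obtain ⟨C, hC⟩ := hΨbdd
  have hrot : IsRotationInvariant (spectrum ℂ Sop) :=
    isRotationInvariant_spectrum_of_coord_shift hι
      (fun ω hω => exists_clm_coord_mul hι (hΨ ω hω) (hC ω hω)) hSop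
  rw [hMφ_eq]
  exact norm_sum_mul_zpow_le_of_isRotationInvariant u hrot φ hz₁ hz₂

/-- If `S` and `S⁻¹` are both bounded on `E`, `φ ∈ F(ℤ)` and the convolution operator
`M_φ : x ↦ φ ∗ x` maps `E` into `E` (hence is bounded), then
`|φ̃(z)| ≤ ‖M_φ‖` for every `z` with `1/ρ(S⁻¹) ≤ |z| ≤ ρ(S)`. -/
theorem stmt12
    {E : Type*} [NormedAddCommGroup E] [NormedSpace ℂ E] [CompleteSpace E]
    (ι : E →ₗ[ℂ] (ℤ → ℂ)) (hι : Function.Injective ι)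
    (e : ℤ → E) (he : ∀ k : ℤ, ι (e k) = Pi.single k 1)
    (hdense : Dense (Submodule.span ℂ (Set.range e) : Set E))
    (hcoord : ∀ n : ℤ, Continuous fun x : E => ι x n)
    (Ψ : ℂ → E → E)
    (hΨ : ∀ z : ℂ, ‖z‖ = 1 → ∀ x : E, ∀ n : ℤ, ι (Ψ z x) n = ι x n * z ^ n)
    (hΨbdd : ∃ C : ℝ, ∀ z : ℂ, ‖z‖ = 1 → ∀ x : E, ‖Ψ z x‖ ≤ C * ‖x‖)
    -- `S` and `S⁻¹` are both bounded, with restrictions `Sop` and `Top` to `E`: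
    (Sop Top : E →L[ℂ] E)
    (hSop : ∀ x : E, ∀ n : ℤ, ι (Sop x) n = ι x (n - 1))
    (hTop : ∀ x : E, ∀ n : ℤ, ι (Top x) n = ι x (n + 1))
    -- `φ` is a finite sequence and `M_φ` is the operator of convolution with `φ`:
    (φ : ℤ →₀ ℂ) (Mφ : E →L[ℂ] E)
    (hMφ : ∀ x : E, ∀ m : ℤ, ι (Mφ x) m = ∑ n ∈ φ.support, φ n * ι x (m - n)) :
    ∀ z : ℂ, (spectralRadius ℂ Top)⁻¹ ≤ (‖z‖₊ : ℝ≥0∞) →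
      (‖z‖₊ : ℝ≥0∞) ≤ spectralRadius ℂ Sop →
      ‖∑ n ∈ φ.support, φ n * z ^ n‖ ≤ ‖Mφ‖ :=
  stmt12_general ι hι Ψ hΨ hΨbdd Sop Top hSop hTop φ Mφ hMφ
end

section
/- Assume S is not bounded but S⁻¹ is bounded on E. Let φ ∈ F(ℤ) with φ(n) = 0 for all n > 0 be such that φ ∗ x ∈ E for every x ∈ E, and let M_φ : E → E be the (bounded) operator x ↦ φ ∗ x. Then |φ̃(z)| ≤ ‖M_φ‖ for every z ∈ ℂ with |z| ≥ 1/ρ(S⁻¹), where φ̃(z) = Σ_n φ(n) zⁿ (a finite sum). -/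
open scoped ENNReal

open Polynomial Metric

/-!
Conjugating `S⁻¹` by the rotation `ψ_w` (`|w| = 1`) gives `w S⁻¹`, so the spectrum of `S⁻¹` is
invariant under rotations and contains the whole circle `|u| = ρ(S⁻¹)`. Since `φ` vanishes on
`ℤ>0`, `M_φ = p(S⁻¹)` for the polynomial `p(X) = Σ φ(n) X^(-n)`, and `φ̃(z) = p(1/z)`. By the
spectral mapping inclusion `p(σ(S⁻¹)) ⊆ σ(M_φ)`, `|p| ≤ ‖M_φ‖` on that circle, hence on the
closed disc by the maximum modulus principle, and `1/z` lies in this disc.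
-/

theorem sphere_subset_of_forall_mul_mem {s : Set ℂ}
    (hs : ∀ u ∈ s, ∀ w : ℂ, ‖w‖ = 1 → w * u ∈ s) {u : ℂ} (hu : u ∈ s) :
    sphere 0 ‖u‖ ⊆ s := by
  intro v hv
  rw [mem_sphere_zero_iff_norm] at hv
  rcases eq_or_ne u 0 with rfl | hu0
  · rwa [norm_eq_zero.mp (hv.trans norm_zero)]
  have hw : ‖v / u‖ = 1 := by rw [norm_div, hv, div_self (norm_ne_zero_iff.mpr hu0)]
  simpa [div_mul_cancel₀ v hu0] using hs u hu (v / u) hw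

theorem Polynomial.norm_eval_le_of_forall_norm_eq (p : ℂ[X]) {r C : ℝ} (hr : 0 < r)
    (hC : ∀ w : ℂ, ‖w‖ = r → ‖p.eval w‖ ≤ C) {v : ℂ} (hv : ‖v‖ ≤ r) :
    ‖p.eval v‖ ≤ C := by
  refine Complex.norm_le_of_forall_mem_frontier_norm_le (isBounded_ball (x := (0 : ℂ)) (r := r))
    p.differentiable.diffContOnCl (fun w (hw : w ∈ frontier (ball 0 r)) => hC w ?_) ?_
  · rwa [frontier_ball 0 hr.ne', mem_sphere_zero_iff_norm] at hw
  · rwa [closure_ball 0 hr.ne', mem_closedBall_zero_iff]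

theorem spectrum.norm_eval_le_norm_aeval {A : Type*} [NormedRing A] [NormedAlgebra ℂ A]
    [NormOneClass A] [CompleteSpace A] {a : A} {r : ℝ} (hr : 0 < r)
    (ha : sphere 0 r ⊆ spectrum ℂ a) (p : ℂ[X]) {v : ℂ} (hv : ‖v‖ ≤ r) :
    ‖p.eval v‖ ≤ ‖aeval a p‖ :=
  p.norm_eval_le_of_forall_norm_eq hr (fun w hw => spectrum.norm_le_norm_of_mem <|
    spectrum.subset_polynomial_aeval a p ⟨w, ha (mem_sphere_zero_iff_norm.mpr hw), rfl⟩) hv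

theorem norm_inv_le_of_inv_le_nnnorm {u z : ℂ} (h : (‖u‖₊ : ℝ≥0∞)⁻¹ ≤ ‖z‖₊) :
    0 < ‖u‖ ∧ ‖z⁻¹‖ ≤ ‖u‖ := by
  have hu : ‖u‖₊ ≠ 0 := fun hu => by simp [hu] at h
  have hz : ‖z‖₊ ≠ 0 := fun hz => by simp [hz] at h
  refine ⟨by simpa [← coe_nnnorm] using hu, ?_⟩
  rw [← ENNReal.coe_inv hu, ENNReal.coe_le_coe,
    inv_le_comm₀ (pos_iff_ne_zero.mpr hu) (pos_iff_ne_zero.mpr hz)] at h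
  rw [norm_inv]
  exact_mod_cast h

-- `Σ φ(n) X^(-n)`: for `φ` supported in `ℤ≤0`, `φ̃(z)` is its value at `z⁻¹`, and `M_φ` its value
-- at `S⁻¹`.
noncomputable def reflectedPolynomial (φ : ℤ →₀ ℂ) : ℂ[X] :=
  ∑ n ∈ φ.support, C (φ n) * X ^ (-n).toNat

theorem toNat_neg_of_mem_support {φ : ℤ →₀ ℂ} (hφ : ∀ n : ℤ, 0 < n → φ n = 0) {n : ℤ}
    (hn : n ∈ φ.support) : ((-n).toNat : ℤ) = -n :=
  Int.toNat_of_nonneg <| neg_nonneg.mpr <| not_lt.mp fun h => Finsupp.mem_support_iff.mp hn (hφ n h)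

theorem eval_inv_reflectedPolynomial {φ : ℤ →₀ ℂ} (hφ : ∀ n : ℤ, 0 < n → φ n = 0) (z : ℂ) :
    (reflectedPolynomial φ).eval z⁻¹ = ∑ n ∈ φ.support, φ n * z ^ n := by
  simp only [reflectedPolynomial, eval_finsetSum, eval_mul, eval_C, eval_pow, eval_X]
  refine Finset.sum_congr rfl fun n hn => ?_
  rw [← zpow_natCast, toNat_neg_of_mem_support hφ hn, inv_zpow', neg_neg]

section SequenceSpace

variable {E : Type*} [NormedAddCommGroup E] [NormedSpace ℂ E] {ι : E →ₗ[ℂ] (ℤ → ℂ)}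

theorem exists_clm_apply_eq_mul_zpow (hι : Function.Injective ι) {Ψ : E → E} {w : ℂ}
    (hΨ : ∀ x n, ι (Ψ x) n = ι x n * w ^ n) {C : ℝ} (hC : ∀ x, ‖Ψ x‖ ≤ C * ‖x‖) :
    ∃ ψ : E →L[ℂ] E, ∀ x n, ι (ψ x) n = ι x n * w ^ n :=
  ⟨LinearMap.mkContinuous
    { toFun := Ψ
      map_add' := fun x y => hι <| funext fun n => by simp [hΨ, add_mul]
      map_smul' := fun c x => hι <| funext fun n => by simp [hΨ, mul_assoc] } C hC, hΨ⟩

theorem clm_mul_eq_one_of_apply_eq_mul_zpow (hι : Function.Injective ι) {a b : ℂ}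
    (hab : b * a = 1) {ψ ψ' : E →L[ℂ] E} (hψ : ∀ x n, ι (ψ x) n = ι x n * a ^ n)
    (hψ' : ∀ x n, ι (ψ' x) n = ι x n * b ^ n) : ψ * ψ' = 1 :=
  ContinuousLinearMap.ext fun x => hι <| funext fun n => by
    simp [hψ, hψ', mul_assoc, ← mul_zpow, hab]

variable {T : E →L[ℂ] E}

theorem mul_mem_spectrum_shift_of_multipliers (hι : Function.Injective ι)
    (hT : ∀ x n, ι (T x) n = ι x (n + 1)) {w : ℂ} (hw : w ≠ 0) {ψ ψ' : E →L[ℂ] E}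
    (hψ : ∀ x n, ι (ψ x) n = ι x n * w ^ n) (hψ' : ∀ x n, ι (ψ' x) n = ι x n * w⁻¹ ^ n)
    {u : ℂ} (hu : u ∈ spectrum ℂ T) : w * u ∈ spectrum ℂ T := by
  let U : (E →L[ℂ] E)ˣ :=
    ⟨ψ, ψ', clm_mul_eq_one_of_apply_eq_mul_zpow hι (inv_mul_cancel₀ hw) hψ hψ',
      clm_mul_eq_one_of_apply_eq_mul_zpow hι (mul_inv_cancel₀ hw) hψ' hψ⟩
  have hconj : T = ↑U * (w • T) * ↑U⁻¹ := ContinuousLinearMap.ext fun x => hι <| funext fun n => by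
    simp only [U, mul_apply_eq_comp, smul_apply, Units.inv_mk,
      map_smul, Pi.smul_apply, smul_eq_mul, hψ, hT, hψ', inv_zpow, zpow_add_one₀ hw]
    field_simp
  rw [hconj, spectrum.units_conjugate]
  exact spectrum.smul_mem_smul_iff (r := Units.mk0 w hw) |>.mpr hu

theorem shift_pow_apply (hT : ∀ x n, ι (T x) n = ι x (n + 1)) (k : ℕ) (x : E) (m : ℤ) :
    ι ((T ^ k) x) m = ι x (m + k) := by
  induction k generalizing x with
  | zero => simp
  | succ k ih => rw [pow_succ, mul_apply_eq_comp, ih, hT]; push_cast; ring_nf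

theorem aeval_reflectedPolynomial_shift_apply (hT : ∀ x n, ι (T x) n = ι x (n + 1))
    {φ : ℤ →₀ ℂ} (hφ : ∀ n : ℤ, 0 < n → φ n = 0) (x : E) (m : ℤ) :
    ι (aeval T (reflectedPolynomial φ) x) m = ∑ n ∈ φ.support, φ n * ι x (m - n) := by
  simp only [reflectedPolynomial, map_sum, sum_apply, Finset.sum_apply,
    aeval_C, aeval_X_pow, map_mul]
  refine Finset.sum_congr rfl fun n hn => ?_
  rw [Algebra.algebraMap_eq_smul_one, smul_mul_assoc, one_mul, smul_apply,
    map_smul, Pi.smul_apply, smul_eq_mul, shift_pow_apply hT, toNat_neg_of_mem_support hφ hn,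
    sub_eq_add_neg]

theorem mul_mem_spectrum_shift_of_norm_eq_one (hι : Function.Injective ι)
    (hT : ∀ x n, ι (T x) n = ι x (n + 1)) {Ψ : ℂ → E → E}
    (hΨ : ∀ z : ℂ, ‖z‖ = 1 → ∀ x n, ι (Ψ z x) n = ι x n * z ^ n) {C : ℝ}
    (hC : ∀ z : ℂ, ‖z‖ = 1 → ∀ x, ‖Ψ z x‖ ≤ C * ‖x‖) {u : ℂ} (hu : u ∈ spectrum ℂ T)
    {w : ℂ} (hw : ‖w‖ = 1) : w * u ∈ spectrum ℂ T := by
  have hw' : ‖w⁻¹‖ = 1 := by rw [norm_inv, hw, inv_one]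
  obtain ⟨ψ, hψ⟩ := exists_clm_apply_eq_mul_zpow hι (hΨ w hw) (hC w hw)
  obtain ⟨ψ', hψ'⟩ := exists_clm_apply_eq_mul_zpow hι (hΨ w⁻¹ hw') (hC w⁻¹ hw')
  exact mul_mem_spectrum_shift_of_multipliers hι hT (norm_ne_zero_iff.mp (hw ▸ one_ne_zero)) hψ hψ'
    hu

end SequenceSpace

theorem stmt13_general
    {E : Type*} [NormedAddCommGroup E] [NormedSpace ℂ E] [CompleteSpace E]
    (ι : E →ₗ[ℂ] (ℤ → ℂ)) (hι : Function.Injective ι)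
    (Ψ : ℂ → E → E)
    (hΨ : ∀ z : ℂ, ‖z‖ = 1 → ∀ x : E, ∀ n : ℤ, ι (Ψ z x) n = ι x n * z ^ n)
    (hΨbdd : ∃ C : ℝ, ∀ z : ℂ, ‖z‖ = 1 → ∀ x : E, ‖Ψ z x‖ ≤ C * ‖x‖)
    -- `S⁻¹` is bounded, with restriction `Top` to `E`:
    (Top : E →L[ℂ] E)
    (hTop : ∀ x : E, ∀ n : ℤ, ι (Top x) n = ι x (n + 1))
    -- `φ` is a finite sequence supported in `ℤ⁻`, `M_φ` the convolution operator:
    (φ : ℤ →₀ ℂ) (hφ : ∀ n : ℤ, 0 < n → φ n = 0)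
    (Mφ : E →L[ℂ] E)
    (hMφ : ∀ x : E, ∀ m : ℤ, ι (Mφ x) m = ∑ n ∈ φ.support, φ n * ι x (m - n)) :
    ∀ z : ℂ, (spectralRadius ℂ Top)⁻¹ ≤ (‖z‖₊ : ℝ≥0∞) →
      ‖∑ n ∈ φ.support, φ n * z ^ n‖ ≤ ‖Mφ‖ := by
  intro z hz
  obtain ⟨C, hC⟩ := hΨbdd
  have : Nontrivial E := by
    by_contra hE
    rw [not_nontrivial_iff_subsingleton] at hE
    simp [spectralRadius, spectrum.of_subsingleton] at hz
  obtain ⟨u, hu, hρ⟩ := spectrum.exists_nnnorm_eq_spectralRadius Top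
  rw [← hρ] at hz
  obtain ⟨hu0, hzu⟩ := norm_inv_le_of_inv_le_nnnorm hz
  have hsphere : sphere 0 ‖u‖ ⊆ spectrum ℂ Top := sphere_subset_of_forall_mul_mem
    (fun v hv w hw => mul_mem_spectrum_shift_of_norm_eq_one hι hTop hΨ hC hv hw) hu
  have hMφ_eq : Mφ = aeval Top (reflectedPolynomial φ) := ContinuousLinearMap.ext fun x =>
    hι <| funext fun m => by rw [hMφ, aeval_reflectedPolynomial_shift_apply hTop hφ]
  rw [← eval_inv_reflectedPolynomial hφ, hMφ_eq]
  exact spectrum.norm_eval_le_norm_aeval hu0 hsphere _ hzu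

/-- If `S` is not bounded but `S⁻¹` is bounded on `E`, `φ ∈ F(ℤ⁻)` and the
convolution operator `M_φ : x ↦ φ ∗ x` maps `E` into `E` (hence is bounded), then
`|φ̃(z)| ≤ ‖M_φ‖` for every `z` with `|z| ≥ 1/ρ(S⁻¹)`. -/
theorem stmt13
    {E : Type*} [NormedAddCommGroup E] [NormedSpace ℂ E] [CompleteSpace E]
    (ι : E →ₗ[ℂ] (ℤ → ℂ)) (hι : Function.Injective ι)
    (e : ℤ → E) (he : ∀ k : ℤ, ι (e k) = Pi.single k 1)
    (hdense : Dense (Submodule.span ℂ (Set.range e) : Set E))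
    (hcoord : ∀ n : ℤ, Continuous fun x : E => ι x n)
    (Ψ : ℂ → E → E)
    (hΨ : ∀ z : ℂ, ‖z‖ = 1 → ∀ x : E, ∀ n : ℤ, ι (Ψ z x) n = ι x n * z ^ n)
    (hΨbdd : ∃ C : ℝ, ∀ z : ℂ, ‖z‖ = 1 → ∀ x : E, ‖Ψ z x‖ ≤ C * ‖x‖)
    -- `S` is not bounded:
    (hSnb : ¬ ∀ x : E, ∃ y : E, ∀ n : ℤ, ι y n = ι x (n - 1))
    -- `S⁻¹` is bounded, with restriction `Top` to `E`:
    (Top : E →L[ℂ] E)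
    (hTop : ∀ x : E, ∀ n : ℤ, ι (Top x) n = ι x (n + 1))
    -- `φ` is a finite sequence supported in `ℤ⁻`, `M_φ` the convolution operator:
    (φ : ℤ →₀ ℂ) (hφ : ∀ n : ℤ, 0 < n → φ n = 0)
    (Mφ : E →L[ℂ] E)
    (hMφ : ∀ x : E, ∀ m : ℤ, ι (Mφ x) m = ∑ n ∈ φ.support, φ n * ι x (m - n)) :
    ∀ z : ℂ, (spectralRadius ℂ Top)⁻¹ ≤ (‖z‖₊ : ℝ≥0∞) →
      ‖∑ n ∈ φ.support, φ n * z ^ n‖ ≤ ‖Mφ‖ :=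
  stmt13_general ι hι Ψ hΨ hΨbdd Top hTop φ hφ Mφ hMφ
end

section
/- Assume S is bounded but S⁻¹ is not bounded on E. Let φ ∈ F(ℤ) with φ(n) = 0 for all n < 0 be such that φ ∗ x ∈ E for every x ∈ E, and let M_φ : E → E be the (bounded) operator x ↦ φ ∗ x. Then |φ̃(z)| ≤ ‖M_φ‖ for every z ∈ ℂ with |z| ≤ ρ(S), where φ̃(z) = Σ_n φ(n) zⁿ (a finite sum, i.e. a polynomial in z). -/
open scoped ENNReal
open Polynomial

/-!
For `|u| = 1` the rotation `x ↦ (x(n) uⁿ)ₙ` is an invertible operator conjugating `S` to `u S`,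
so `σ(S)` is invariant under rotations and contains the whole circle `|w| = ρ(S)`. Since `φ` is
supported in `ℕ`, `M_φ = φ̃(S)`, and the spectral mapping theorem gives `|φ̃(w)| ≤ ‖M_φ‖` on that
circle; the maximum modulus principle extends the bound to the disc.
-/

theorem Polynomial.norm_eval_le_of_forall_norm_eq_s14 (p : ℂ[X]) {r M : ℝ}
    (h : ∀ w : ℂ, ‖w‖ = r → ‖p.eval w‖ ≤ M) {z : ℂ} (hz : ‖z‖ ≤ r) : ‖p.eval z‖ ≤ M := by
  rcases hz.eq_or_lt with hzr | hzr
  · exact h z hzr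
  have hr : r ≠ 0 := ((norm_nonneg z).trans_lt hzr).ne'
  refine Complex.norm_le_of_forall_mem_frontier_norm_le (U := Metric.ball 0 r)
    Metric.isBounded_ball p.differentiable.diffContOnCl (fun w hw => h w ?_) ?_
  · simpa [frontier_ball (0 : ℂ) hr] using hw
  · simpa [closure_ball (0 : ℂ) hr] using hzr.le

namespace spectrum

theorem mul_mem_of_units_conj {𝕜 A : Type*} [Field 𝕜] [Ring A] [Algebra 𝕜 A] {a : A} {u : 𝕜}
    (hu : u ≠ 0) {U : Aˣ} (hU : ↑U * a * ↑U⁻¹ = u • a) {w : 𝕜} (hw : w ∈ spectrum 𝕜 a) :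
    u * w ∈ spectrum 𝕜 a := by
  have := (smul_mem_smul_iff (r := Units.mk0 u hu)).2 hw
  rwa [Units.smul_mk0, Units.smul_mk0, ← hU, units_conjugate, smul_eq_mul] at this

theorem norm_eval_le_norm_aeval_s14 {A : Type*} [NormedRing A] [NormedAlgebra ℂ A] [CompleteSpace A]
    [NormOneClass A] [Nontrivial A] {a : A}
    (hrot : ∀ u : ℂ, ‖u‖ = 1 → ∀ w ∈ spectrum ℂ a, u * w ∈ spectrum ℂ a) (p : ℂ[X]) {z : ℂ}
    (hz : (‖z‖₊ : ℝ≥0∞) ≤ spectralRadius ℂ a) : ‖p.eval z‖ ≤ ‖aeval a p‖ := by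
  obtain ⟨l, hl, hla⟩ := exists_nnnorm_eq_spectralRadius a
  have hcircle : ∀ w : ℂ, ‖w‖ = ‖l‖ → w ∈ spectrum ℂ a := by
    intro w hw
    rcases eq_or_ne l 0 with rfl | hl0
    · rwa [norm_eq_zero.1 (hw.trans norm_zero)]
    · have hwl : ‖w / l‖ = 1 := by rw [norm_div, hw, div_self (norm_ne_zero_iff.2 hl0)]
      simpa [div_mul_cancel₀ w hl0] using hrot (w / l) hwl l hl
  refine p.norm_eval_le_of_forall_norm_eq_s14
    (fun w hw => norm_le_norm_of_mem (subset_polynomial_aeval a p ⟨w, hcircle w hw, rfl⟩)) ?_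
  rw [← hla] at hz
  exact_mod_cast hz

end spectrum

namespace Finsupp

variable {R : Type*}

-- Only meaningful for `φ` supported in `ℕ`: `Int.toNat` lumps the negative indices into `X ^ 0`.
noncomputable def toPolynomial [Semiring R] (φ : ℤ →₀ R) : R[X] :=
  ∑ n ∈ φ.support, monomial n.toNat (φ n)

theorem aeval_toPolynomial [CommSemiring R] {A : Type*} [Semiring A] [Algebra R A]
    (φ : ℤ →₀ R) (a : A) : aeval a φ.toPolynomial = ∑ n ∈ φ.support, φ n • a ^ n.toNat := by
  simp only [toPolynomial, map_sum, aeval_monomial, Algebra.smul_def]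

theorem nonneg_of_mem_support [Zero R] {φ : ℤ →₀ R} (hφ : ∀ n : ℤ, n < 0 → φ n = 0) {n : ℤ}
    (hn : n ∈ φ.support) : 0 ≤ n :=
  not_lt.1 fun h => mem_support_iff.1 hn (hφ n h)

theorem eval_toPolynomial [Field R] {φ : ℤ →₀ R} (hφ : ∀ n : ℤ, n < 0 → φ n = 0) (z : R) :
    φ.toPolynomial.eval z = ∑ n ∈ φ.support, φ n * z ^ n := by
  simp only [toPolynomial, eval_finsetSum, eval_monomial]
  refine Finset.sum_congr rfl fun n hn => ?_
  rw [← zpow_natCast, Int.toNat_of_nonneg (nonneg_of_mem_support hφ hn)]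

end Finsupp

section CoordinateSpace

variable {E : Type*} [NormedAddCommGroup E] [NormedSpace ℂ E] {ι : E →ₗ[ℂ] (ℤ → ℂ)}

theorem exists_clm_of_coord_eq_mul (hι : Function.Injective ι) {f : E → E} {c : ℤ → ℂ}
    (hf : ∀ x n, ι (f x) n = ι x n * c n) {C : ℝ} (hC : ∀ x, ‖f x‖ ≤ C * ‖x‖) :
    ∃ L : E →L[ℂ] E, ∀ x n, ι (L x) n = ι x n * c n := by
  let Lf : E →ₗ[ℂ] E :=
    { toFun := f
      map_add' := fun x y => hι <| funext fun n => by simp [hf, add_mul]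
      map_smul' := fun a x => hι <| funext fun n => by simp [hf, mul_assoc] }
  exact ⟨Lf.mkContinuous C hC, hf⟩

variable {Sop : E →L[ℂ] E}

theorem coord_pow_apply (hSop : ∀ x n, ι (Sop x) n = ι x (n - 1)) (m : ℕ) (x : E) (n : ℤ) :
    ι ((Sop ^ m) x) n = ι x (n - m) := by
  induction m generalizing x with
  | zero => simp
  | succ m ih =>
    rw [pow_succ, mul_apply_eq_comp, ih, hSop]
    push_cast
    ring_nf

theorem exists_units_conj_eq_smul (hι : Function.Injective ι)
    (hSop : ∀ x n, ι (Sop x) n = ι x (n - 1))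
    (hrot : ∀ v : ℂ, ‖v‖ = 1 → ∃ L : E →L[ℂ] E, ∀ x n, ι (L x) n = ι x n * v ^ n)
    {u : ℂ} (hu : ‖u‖ = 1) : ∃ U : (E →L[ℂ] E)ˣ, ↑U * Sop * ↑U⁻¹ = u • Sop := by
  have hu0 : u ≠ 0 := norm_ne_zero_iff.1 (hu ▸ one_ne_zero)
  obtain ⟨L, hL⟩ := hrot u hu
  obtain ⟨L', hL'⟩ := hrot u⁻¹ (by rw [norm_inv, hu, inv_one])
  have hLL' : L * L' = 1 := by
    ext x
    exact hι <| funext fun n => by simp [hL, hL', zpow_ne_zero n hu0]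
  have hL'L : L' * L = 1 := by
    ext x
    exact hι <| funext fun n => by simp [hL, hL', zpow_ne_zero n hu0]
  have hconj : L * Sop = u • (Sop * L) := by
    ext x
    refine hι <| funext fun n => ?_
    simp only [mul_apply_eq_comp, smul_apply, map_smul,
      Pi.smul_apply, smul_eq_mul, hL, hSop, zpow_sub_one₀ hu0]
    field_simp
  refine ⟨⟨L, L', hLL', hL'L⟩, ?_⟩
  change L * Sop * L' = u • Sop
  rw [hconj, smul_mul_assoc, mul_assoc, hLL', mul_one]

theorem eq_aeval_toPolynomial (hι : Function.Injective ι)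
    (hSop : ∀ x n, ι (Sop x) n = ι x (n - 1))
    {φ : ℤ →₀ ℂ} (hφ : ∀ n : ℤ, n < 0 → φ n = 0) {Mφ : E →L[ℂ] E}
    (hMφ : ∀ x m, ι (Mφ x) m = ∑ n ∈ φ.support, φ n * ι x (m - n)) :
    Mφ = aeval Sop φ.toPolynomial := by
  ext x
  refine hι <| funext fun m => ?_
  simp only [hMφ, Finsupp.aeval_toPolynomial, sum_apply,
    smul_apply, map_sum, map_smul, Finset.sum_apply, Pi.smul_apply,
    smul_eq_mul, coord_pow_apply hSop]
  refine Finset.sum_congr rfl fun n hn => ?_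
  rw [Int.toNat_of_nonneg (Finsupp.nonneg_of_mem_support hφ hn)]

end CoordinateSpace

theorem stmt14_general
    {E : Type*} [NormedAddCommGroup E] [NormedSpace ℂ E] [CompleteSpace E]
    (ι : E →ₗ[ℂ] (ℤ → ℂ)) (hι : Function.Injective ι)
    (e : ℤ → E) (he : ∀ k : ℤ, ι (e k) = Pi.single k 1)
    (Ψ : ℂ → E → E)
    (hΨ : ∀ z : ℂ, ‖z‖ = 1 → ∀ x : E, ∀ n : ℤ, ι (Ψ z x) n = ι x n * z ^ n)
    (hΨbdd : ∃ C : ℝ, ∀ z : ℂ, ‖z‖ = 1 → ∀ x : E, ‖Ψ z x‖ ≤ C * ‖x‖)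
    -- `S` is bounded, with restriction `Sop` to `E`:
    (Sop : E →L[ℂ] E)
    (hSop : ∀ x : E, ∀ n : ℤ, ι (Sop x) n = ι x (n - 1))
    -- `φ` is a finite sequence supported in `ℤ⁺`, `M_φ` the convolution operator:
    (φ : ℤ →₀ ℂ) (hφ : ∀ n : ℤ, n < 0 → φ n = 0)
    (Mφ : E →L[ℂ] E)
    (hMφ : ∀ x : E, ∀ m : ℤ, ι (Mφ x) m = ∑ n ∈ φ.support, φ n * ι x (m - n)) :
    ∀ z : ℂ, (‖z‖₊ : ℝ≥0∞) ≤ spectralRadius ℂ Sop →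
      ‖∑ n ∈ φ.support, φ n * z ^ n‖ ≤ ‖Mφ‖ := by
  intro z hz
  have : Nontrivial E := ⟨e 0, 0, fun h => by simpa [h] using congrFun (he 0) 0⟩
  obtain ⟨C, hC⟩ := hΨbdd
  have hrot : ∀ u : ℂ, ‖u‖ = 1 → ∀ w ∈ spectrum ℂ Sop, u * w ∈ spectrum ℂ Sop := by
    intro u hu w hw
    obtain ⟨U, hU⟩ := exists_units_conj_eq_smul hι hSop
      (fun v hv => exists_clm_of_coord_eq_mul hι (hΨ v hv) (hC v hv)) hu
    exact spectrum.mul_mem_of_units_conj (norm_ne_zero_iff.1 (hu ▸ one_ne_zero)) hU hw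
  rw [← Finsupp.eval_toPolynomial hφ, eq_aeval_toPolynomial hι hSop hφ hMφ]
  exact spectrum.norm_eval_le_norm_aeval_s14 hrot _ hz

/-- If `S` is bounded but `S⁻¹` is not bounded on `E`, `φ ∈ F(ℤ⁺)` and the
convolution operator `M_φ : x ↦ φ ∗ x` maps `E` into `E` (hence is bounded), then
`|φ̃(z)| ≤ ‖M_φ‖` for every `z` with `|z| ≤ ρ(S)`. -/
theorem stmt14
    {E : Type*} [NormedAddCommGroup E] [NormedSpace ℂ E] [CompleteSpace E]
    (ι : E →ₗ[ℂ] (ℤ → ℂ)) (hι : Function.Injective ι)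
    (e : ℤ → E) (he : ∀ k : ℤ, ι (e k) = Pi.single k 1)
    (hdense : Dense (Submodule.span ℂ (Set.range e) : Set E))
    (hcoord : ∀ n : ℤ, Continuous fun x : E => ι x n)
    (Ψ : ℂ → E → E)
    (hΨ : ∀ z : ℂ, ‖z‖ = 1 → ∀ x : E, ∀ n : ℤ, ι (Ψ z x) n = ι x n * z ^ n)
    (hΨbdd : ∃ C : ℝ, ∀ z : ℂ, ‖z‖ = 1 → ∀ x : E, ‖Ψ z x‖ ≤ C * ‖x‖)
    -- `S` is bounded, with restriction `Sop` to `E`: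
    (Sop : E →L[ℂ] E)
    (hSop : ∀ x : E, ∀ n : ℤ, ι (Sop x) n = ι x (n - 1))
    -- `S⁻¹` is not bounded:
    (hTnb : ¬ ∀ x : E, ∃ y : E, ∀ n : ℤ, ι y n = ι x (n + 1))
    -- `φ` is a finite sequence supported in `ℤ⁺`, `M_φ` the convolution operator:
    (φ : ℤ →₀ ℂ) (hφ : ∀ n : ℤ, n < 0 → φ n = 0)
    (Mφ : E →L[ℂ] E)
    (hMφ : ∀ x : E, ∀ m : ℤ, ι (Mφ x) m = ∑ n ∈ φ.support, φ n * ι x (m - n)) :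
    ∀ z : ℂ, (‖z‖₊ : ℝ≥0∞) ≤ spectralRadius ℂ Sop →
      ‖∑ n ∈ φ.support, φ n * z ^ n‖ ≤ ‖Mφ‖ :=
  stmt14_general ι hι e he Ψ hΨ hΨbdd Sop hSop φ hφ Mφ hMφ
end

section
/- If 𝐒 is bounded on 𝐄 but 𝐒₋₁ is not bounded, then every Toeplitz operator T on 𝐄 satisfies T̂(k) = 0 for all k < 0; symmetrically, if 𝐒₋₁ is bounded on 𝐄 but 𝐒 is not bounded, then every Toeplitz operator T on 𝐄 satisfies T̂(k) = 0 for all k > 0. -/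
/-!
Writing `γ_θ` for the rotation by `e^{iθ}`, the family `θ ↦ γ_θ T γ_{-θ}` is strongly continuous
and uniformly bounded, so its `d`-th Fourier coefficient
`P_d = (2π)⁻¹ ∫₀^{2π} e^{idθ} γ_θ T γ_{-θ} dθ` is a bounded operator on `𝐄`. On basis vectors,
and hence by density everywhere, `P_d = T̂(-d) 𝐒₋₁^d` for `d ≥ 0` and `P_d = T̂(-d) 𝐒^{-d}` for
`d ≤ 0`. So `T̂(-m) ≠ 0` with `m ≥ 1` makes `𝐒₋₁^m` bounded, and then
`𝐒₋₁ = 𝐒₋₁^m 𝐒^{m-1}` is bounded whenever `𝐒` is; symmetrically `T̂(m) ≠ 0` makes `𝐒^m` bounded,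
and `𝐒 = 𝐒₋₁^{m-1} 𝐒^m`.
-/

open Complex Filter Topology
open scoped Real

section StronglyContinuous

variable {𝕜 E F X : Type*} [NontriviallyNormedField 𝕜] [NormedAddCommGroup E] [NormedSpace 𝕜 E]
  [NormedAddCommGroup F] [NormedSpace 𝕜 F]

theorem continuous_apply_of_dense_span [TopologicalSpace X] {A : X → E →L[𝕜] F} {M : ℝ}
    (hA : ∀ t, ‖A t‖ ≤ M) {s : Set E} (hs : Dense (Submodule.span 𝕜 s : Set E))
    (h : ∀ x ∈ s, Continuous fun t => A t x) (x : E) : Continuous fun t => A t x := by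
  refine continuous_iff_continuousAt.2 fun t₀ => ?_
  have hequi : Equicontinuous fun t => ⇑(A t) :=
    ((NormedSpace.equicontinuous_TFAE A).out 1 5).2 (⟨M, hA⟩ : ∃ C, ∀ t, ‖A t‖ ≤ C)
  let S : Submodule 𝕜 E :=
    { carrier := {y | Tendsto (fun t => A t y) (𝓝 t₀) (𝓝 (A t₀ y))}
      add_mem' := fun hy hz => by simpa only [Set.mem_ofPred_eq, map_add] using hy.add hz
      zero_mem' := by simpa only [Set.mem_ofPred_eq, map_zero] using tendsto_const_nhds
      smul_mem' := fun c y hy => by simpa only [Set.mem_ofPred_eq, map_smul] using hy.const_smul c }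
  have hS : IsClosed (S : Set E) := hequi.isClosed_setOfPred_tendsto (A t₀).continuous
  have hspan : Submodule.span 𝕜 s ≤ S := Submodule.span_le.2 fun y hy => (h y hy).continuousAt
  exact hS.closure_subset_iff.2 hspan (hs x)

theorem opNorm_comp_comp_le_of_le {A B T : E →L[𝕜] E} {M : ℝ} (hA : ‖A‖ ≤ M) (hB : ‖B‖ ≤ M) :
    ‖A.comp (T.comp B)‖ ≤ M * (‖T‖ * M) :=
  (A.opNorm_comp_le _).trans <| mul_le_mul hA ((T.opNorm_comp_le B).trans (by gcongr))
    (norm_nonneg _) ((norm_nonneg _).trans hA)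

variable [NormedSpace ℝ F] [SMulCommClass ℝ 𝕜 F]

noncomputable def intervalIntegralCLM (A : ℝ → E →L[𝕜] F) (hA : ∀ x, Continuous fun t => A t x)
    {M : ℝ} (hM : ∀ t, ‖A t‖ ≤ M) (a b : ℝ) : E →L[𝕜] F :=
  LinearMap.mkContinuous
    { toFun := fun x => ∫ t in a..b, A t x
      map_add' := fun x y => by
        simp only [map_add]
        exact intervalIntegral.integral_add ((hA x).intervalIntegrable a b)
          ((hA y).intervalIntegrable a b)
      map_smul' := fun c x => by
        simp only [map_smul, RingHom.id_apply]
        exact intervalIntegral.integral_smul c _ }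
    (M * |b - a|) fun x => by
      calc ‖∫ t in a..b, A t x‖ ≤ M * ‖x‖ * |b - a| :=
            intervalIntegral.norm_integral_le_of_norm_le_const fun t _ =>
              (A t).le_of_opNorm_le (hM t) x
        _ = M * |b - a| * ‖x‖ := by ring

theorem intervalIntegralCLM_apply (A : ℝ → E →L[𝕜] F) (hA : ∀ x, Continuous fun t => A t x)
    {M : ℝ} (hM : ∀ t, ‖A t‖ ≤ M) (a b : ℝ) (x : E) :
    intervalIntegralCLM A hA hM a b x = ∫ t in a..b, A t x := rfl

end StronglyContinuous

theorem exists_backward_shift_iterate {X α : Type*} {f : X → ℕ → α}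
    (h : ∀ x, ∃ y, ∀ n, f y n = f x (n + 1)) (m : ℕ) (x : X) :
    ∃ y, ∀ n, f y n = f x (n + m) := by
  induction m generalizing x with
  | zero => exact ⟨x, fun n => rfl⟩
  | succ m ih =>
    obtain ⟨y, hy⟩ := h x
    obtain ⟨z, hz⟩ := ih y
    exact ⟨z, fun n => by rw [hz, hy, add_assoc]⟩

theorem exists_forward_shift_iterate {X α : Type*} {f : X → ℕ → α}
    (h : ∀ x, ∃ y, ∀ n, f y (n + 1) = f x n) (m : ℕ) (x : X) :
    ∃ y, ∀ n, f y (n + m) = f x n := by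
  induction m generalizing x with
  | zero => exact ⟨x, fun n => rfl⟩
  | succ m ih =>
    obtain ⟨y, hy⟩ := h x
    obtain ⟨z, hz⟩ := ih y
    exact ⟨z, fun n => by rw [← add_assoc, add_right_comm, hz, hy]⟩

theorem integral_exp_int_mul_I (k : ℤ) :
    ∫ θ in (0 : ℝ)..2 * π, exp (↑(k * θ) * I) = if k = 0 then (2 * π : ℂ) else 0 := by
  split_ifs with hk
  · simp [hk]
  · have hc : (k : ℂ) * I ≠ 0 := by simp [I_ne_zero, hk]
    have h2π : exp ((k : ℂ) * I * ↑(2 * π)) = 1 := by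
      rw [← exp_int_mul_two_pi_mul_I k]; push_cast; ring_nf
    simp_rw [show ∀ θ : ℝ, (↑(k * θ) : ℂ) * I = (k : ℂ) * I * θ from fun θ => by push_cast; ring]
    rw [integral_exp_mul_complex hc, h2π]
    simp

theorem eq_symbol_of_shift_invariant {a : ℕ → ℕ → ℂ} {c : ℤ → ℂ}
    (ha : ∀ k n, a (k + 1) (n + 1) = a k n) (h₁ : ∀ n : ℕ, c n = a 0 n)
    (h₂ : ∀ n : ℕ, c (-n) = a n 0) (k n : ℕ) : a k n = c (n - k) := by
  induction k generalizing n with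
  | zero => simp [h₁]
  | succ k ih =>
    cases n with
    | zero => simpa using (h₂ (k + 1)).symm
    | succ n => rw [ha, ih]; congr 1; push_cast; ring

section SequenceSpace

variable {E : Type*} [NormedAddCommGroup E] [NormedSpace ℂ E] {ι : E →ₗ[ℂ] ℕ → ℂ} {e : ℕ → E}

def coordCLM (hcoord : ∀ n, Continuous fun x : E => ι x n) (n : ℕ) : E →L[ℂ] ℂ :=
  ⟨(LinearMap.proj n).comp ι, hcoord n⟩

theorem coordCLM_apply (hcoord : ∀ n, Continuous fun x : E => ι x n) (n : ℕ) (x : E) :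
    coordCLM hcoord n x = ι x n := rfl

theorem coord_apply_eq_of_basis (hcoord : ∀ n, Continuous fun x : E => ι x n)
    (he : ∀ k, ι (e k) = Pi.single k 1) (hdense : Dense (Submodule.span ℂ (Set.range e) : Set E))
    {P : E →L[ℂ] E} {d : ℤ} {c : ℂ}
    (hP : ∀ j n : ℕ, ι (P (e j)) n = if (j : ℤ) = n + d then c else 0)
    {n i : ℕ} (hni : (n : ℤ) + d = i) (x : E) : ι (P x) n = c * ι x i := by
  have h : (coordCLM hcoord n).comp P = c • coordCLM hcoord i := by
    refine ContinuousLinearMap.ext_on hdense ?_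
    rintro _ ⟨j, rfl⟩
    simp only [ContinuousLinearMap.comp_apply, smul_apply, coordCLM_apply,
      hP, he, smul_eq_mul, Pi.single_apply]
    split_ifs <;> first | omega | simp
  exact DFunLike.congr_fun h x

theorem coord_apply_eq_zero_of_basis (hcoord : ∀ n, Continuous fun x : E => ι x n)
    (hdense : Dense (Submodule.span ℂ (Set.range e) : Set E))
    {P : E →L[ℂ] E} {d : ℤ} {c : ℂ}
    (hP : ∀ j n : ℕ, ι (P (e j)) n = if (j : ℤ) = n + d then c else 0)
    {n : ℕ} (hn : (n : ℤ) + d < 0) (x : E) : ι (P x) n = 0 := by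
  have h : (coordCLM hcoord n).comp P = 0 := by
    refine ContinuousLinearMap.ext_on hdense ?_
    rintro _ ⟨j, rfl⟩
    simp only [ContinuousLinearMap.comp_apply, coordCLM_apply, hP, zero_apply]
    exact if_neg (by omega)
  exact DFunLike.congr_fun h x

theorem exists_rotation_clm (hι : Function.Injective ι) {Γ : ℂ → E → E}
    (hΓ : ∀ z : ℂ, ‖z‖ = 1 → ∀ x : E, ∀ n : ℕ, ι (Γ z x) n = z ^ n * ι x n)
    (hΓbdd : ∃ C : ℝ, ∀ z : ℂ, ‖z‖ = 1 → ∀ x : E, ‖Γ z x‖ ≤ C * ‖x‖) :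
    ∃ (R : ℝ → E →L[ℂ] E) (M : ℝ),
      (∀ θ x n, ι (R θ x) n = exp (θ * I) ^ n * ι x n) ∧ ∀ θ, ‖R θ‖ ≤ M := by
  obtain ⟨C, hC⟩ := hΓbdd
  have hΓθ := fun θ : ℝ => hΓ _ (norm_exp_ofReal_mul_I θ)
  let R : ℝ → E →L[ℂ] E := fun θ => LinearMap.mkContinuous
    { toFun := Γ (exp (θ * I))
      map_add' := fun x y => hι <| funext fun n => by simp only [hΓθ, map_add, Pi.add_apply]; ring
      map_smul' := fun a x => hι <| funext fun n => by
        simp only [hΓθ, map_smul, Pi.smul_apply, smul_eq_mul, RingHom.id_apply]; ring }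
    C (hC _ (norm_exp_ofReal_mul_I θ))
  exact ⟨R, max C 0, fun θ => hΓθ θ, fun θ => LinearMap.mkContinuous_norm_le' _ _⟩

variable {R : ℝ → E →L[ℂ] E} {M : ℝ}

theorem rotation_apply_basis (hι : Function.Injective ι) (he : ∀ k, ι (e k) = Pi.single k 1)
    (hR : ∀ θ x n, ι (R θ x) n = exp (θ * I) ^ n * ι x n) (θ : ℝ) (j : ℕ) :
    R θ (e j) = exp (θ * I) ^ j • e j := by
  refine hι (funext fun n => ?_)
  rw [hR, map_smul, he, Pi.smul_apply, smul_eq_mul, Pi.single_apply]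
  split_ifs with h
  · rw [h]
  · simp

theorem continuous_rotation_apply (hι : Function.Injective ι) (he : ∀ k, ι (e k) = Pi.single k 1)
    (hdense : Dense (Submodule.span ℂ (Set.range e) : Set E))
    (hR : ∀ θ x n, ι (R θ x) n = exp (θ * I) ^ n * ι x n) (hRM : ∀ θ, ‖R θ‖ ≤ M) (x : E) :
    Continuous fun θ => R θ x := by
  refine continuous_apply_of_dense_span hRM hdense ?_ x
  rintro _ ⟨j, rfl⟩
  simp_rw [rotation_apply_basis hι he hR]
  fun_prop

theorem continuous_conj_rotation_apply (hι : Function.Injective ι)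
    (he : ∀ k, ι (e k) = Pi.single k 1) (hdense : Dense (Submodule.span ℂ (Set.range e) : Set E))
    (hR : ∀ θ x n, ι (R θ x) n = exp (θ * I) ^ n * ι x n) (hRM : ∀ θ, ‖R θ‖ ≤ M)
    (T : E →L[ℂ] E) (x : E) : Continuous fun θ => R θ (T (R (-θ) x)) := by
  refine continuous_apply_of_dense_span (A := fun θ => (R θ).comp (T.comp (R (-θ))))
    (fun θ => opNorm_comp_comp_le_of_le (hRM θ) (hRM (-θ))) hdense ?_ x
  rintro _ ⟨j, rfl⟩
  simp only [ContinuousLinearMap.comp_apply, rotation_apply_basis hι he hR, map_smul]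
  exact (by fun_prop : Continuous fun θ : ℝ => exp (↑(-θ) * I) ^ j).smul
    (continuous_rotation_apply hι he hdense hR hRM _)


end SequenceSpace

section Toeplitz

variable {E : Type*} [NormedAddCommGroup E] [NormedSpace ℂ E] [CompleteSpace E]
  {ι : E →ₗ[ℂ] ℕ → ℂ} {e : ℕ → E} {R : ℝ → E →L[ℂ] E} {M : ℝ}

theorem exists_symbol_smul_shift_clm (hι : Function.Injective ι)
    (he : ∀ k, ι (e k) = Pi.single k 1) (hdense : Dense (Submodule.span ℂ (Set.range e) : Set E))
    (hcoord : ∀ n, Continuous fun x : E => ι x n)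
    (hR : ∀ θ x n, ι (R θ x) n = exp (θ * I) ^ n * ι x n) (hRM : ∀ θ, ‖R θ‖ ≤ M)
    {T : E →L[ℂ] E} {c : ℤ → ℂ} (hT : ∀ k n : ℕ, ι (T (e k)) n = c (n - k)) (d : ℤ) :
    ∃ P : E →L[ℂ] E, ∀ j n : ℕ, ι (P (e j)) n = if (j : ℤ) = n + d then c (-d) else 0 := by
  set A : ℝ → E →L[ℂ] E := fun θ => exp (↑(d * θ) * I) • (R θ).comp (T.comp (R (-θ)))
  have hA : ∀ x, Continuous fun θ => A θ x := fun x =>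
    (by fun_prop : Continuous fun θ : ℝ => exp (↑(d * θ) * I)).smul
      (continuous_conj_rotation_apply hι he hdense hR hRM T x)
  have hAM : ∀ θ, ‖A θ‖ ≤ M * (‖T‖ * M) := fun θ => by
    rw [norm_smul, norm_exp_ofReal_mul_I, one_mul]
    exact opNorm_comp_comp_le_of_le (hRM θ) (hRM (-θ))
  refine ⟨(2 * π : ℂ)⁻¹ • intervalIntegralCLM A hA hAM 0 (2 * π), fun j n => ?_⟩
  have hintegrand : ∀ θ : ℝ, coordCLM hcoord n (A θ (e j)) =
      c (n - j) * exp (↑((d + n - j : ℤ) * θ) * I) := fun θ => by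
    simp only [A, coordCLM_apply, smul_apply, ContinuousLinearMap.comp_apply,
      rotation_apply_basis hι he hR, map_smul, smul_eq_mul, hR, hT]
    rw [← exp_nat_mul, ← exp_nat_mul]
    calc _ = c (n - j) * exp (↑(d * θ) * I + ↑j * (↑(-θ) * I) + ↑n * (↑θ * I)) := by
          rw [exp_add, exp_add]; ring
      _ = _ := by congr 2; push_cast; ring
  have hint : ι (intervalIntegralCLM A hA hAM 0 (2 * π) (e j)) n =
      c (n - j) * if d + n - j = 0 then (2 * π : ℂ) else 0 := by
    rw [← coordCLM_apply hcoord, intervalIntegralCLM_apply,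
      ← (coordCLM hcoord n).intervalIntegral_comp_comm ((hA _).intervalIntegrable _ _)]
    simp_rw [hintegrand, intervalIntegral.integral_const_mul, integral_exp_int_mul_I]
  rw [smul_apply, map_smul, Pi.smul_apply, hint, smul_eq_mul]
  split_ifs with h₁ h₂ h₂
  · rw [show (n : ℤ) - j = -d by omega]
    field_simp
  · omega
  · omega
  · simp

theorem exists_backward_shift_of_symbol_ne_zero (hι : Function.Injective ι)
    (he : ∀ k, ι (e k) = Pi.single k 1) (hdense : Dense (Submodule.span ℂ (Set.range e) : Set E))
    (hcoord : ∀ n, Continuous fun x : E => ι x n)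
    (hR : ∀ θ x n, ι (R θ x) n = exp (θ * I) ^ n * ι x n) (hRM : ∀ θ, ‖R θ‖ ≤ M)
    {T : E →L[ℂ] E} {c : ℤ → ℂ} (hT : ∀ k n : ℕ, ι (T (e k)) n = c (n - k))
    {m : ℕ} (hm : c (-m) ≠ 0) (x : E) : ∃ y : E, ∀ n, ι y n = ι x (n + m) := by
  obtain ⟨P, hP⟩ := exists_symbol_smul_shift_clm hι he hdense hcoord hR hRM hT m
  refine ⟨(c (-m))⁻¹ • P x, fun n => ?_⟩
  rw [map_smul, Pi.smul_apply, coord_apply_eq_of_basis hcoord he hdense hP rfl,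
    smul_eq_mul, inv_mul_cancel_left₀ hm]

theorem exists_forward_shift_of_symbol_ne_zero (hι : Function.Injective ι)
    (he : ∀ k, ι (e k) = Pi.single k 1) (hdense : Dense (Submodule.span ℂ (Set.range e) : Set E))
    (hcoord : ∀ n, Continuous fun x : E => ι x n)
    (hR : ∀ θ x n, ι (R θ x) n = exp (θ * I) ^ n * ι x n) (hRM : ∀ θ, ‖R θ‖ ≤ M)
    {T : E →L[ℂ] E} {c : ℤ → ℂ} (hT : ∀ k n : ℕ, ι (T (e k)) n = c (n - k))
    {m : ℕ} (hm : c m ≠ 0) (x : E) :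
    ∃ y : E, (∀ n < m, ι y n = 0) ∧ ∀ n, ι y (n + m) = ι x n := by
  obtain ⟨P, hP⟩ := exists_symbol_smul_shift_clm hι he hdense hcoord hR hRM hT (-m)
  rw [neg_neg] at hP
  refine ⟨(c m)⁻¹ • P x, fun n hn => ?_, fun n => ?_⟩
  · rw [map_smul, Pi.smul_apply, coord_apply_eq_zero_of_basis hcoord hdense hP (by omega),
      smul_zero]
  · rw [map_smul, Pi.smul_apply, coord_apply_eq_of_basis hcoord he hdense hP (by push_cast; ring),
      smul_eq_mul, inv_mul_cancel_left₀ hm]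

end Toeplitz

/-- If `𝐒` is bounded on `𝐄` but `𝐒₋₁` is not, then every Toeplitz operator `T`
satisfies `T̂(k) = 0` for `k < 0`; symmetrically, if `𝐒₋₁` is bounded but `𝐒` is not,
then `T̂(k) = 0` for `k > 0`. -/
theorem stmt16
    {E : Type*} [NormedAddCommGroup E] [NormedSpace ℂ E] [CompleteSpace E]
    (ι : E →ₗ[ℂ] (ℕ → ℂ)) (hι : Function.Injective ι)
    (e : ℕ → E) (he : ∀ k : ℕ, ι (e k) = Pi.single k 1)
    (hdense : Dense (Submodule.span ℂ (Set.range e) : Set E))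
    (hcoord : ∀ n : ℕ, Continuous fun x : E => ι x n)
    (Γ : ℂ → E → E)
    (hΓ : ∀ z : ℂ, ‖z‖ = 1 → ∀ x : E, ∀ n : ℕ, ι (Γ z x) n = z ^ n * ι x n)
    (hΓbdd : ∃ C : ℝ, ∀ z : ℂ, ‖z‖ = 1 → ∀ x : E, ‖Γ z x‖ ≤ C * ‖x‖)
    -- `T` is a Toeplitz operator on `𝐄`:
    (T : E →L[ℂ] E)
    (hT : ∀ k n : ℕ, ι (T (e (k + 1))) (n + 1) = ι (T (e k)) n)
    -- `Th` is the symbol sequence `T̂`: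
    (Th : ℤ → ℂ)
    (hTh₁ : ∀ n : ℕ, Th n = ι (T (e 0)) n)
    (hTh₂ : ∀ n : ℕ, Th (-(n : ℤ)) = ι (T (e n)) 0) :
    -- if `𝐒` is bounded but `𝐒₋₁` is not bounded, then `T̂(k) = 0` for `k < 0`:
    ((∀ x : E, ∃ y : E, ι y 0 = 0 ∧ ∀ n : ℕ, ι y (n + 1) = ι x n) →
      (¬ ∀ x : E, ∃ y : E, ∀ n : ℕ, ι y n = ι x (n + 1)) →
      ∀ k : ℤ, k < 0 → Th k = 0) ∧
    -- if `𝐒₋₁` is bounded but `𝐒` is not bounded, then `T̂(k) = 0` for `k > 0`: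
    ((∀ x : E, ∃ y : E, ∀ n : ℕ, ι y n = ι x (n + 1)) →
      (¬ ∀ x : E, ∃ y : E, ι y 0 = 0 ∧ ∀ n : ℕ, ι y (n + 1) = ι x n) →
      ∀ k : ℤ, 0 < k → Th k = 0) := by
  obtain ⟨R, M, hR, hRM⟩ := exists_rotation_clm hι hΓ hΓbdd
  have hTe : ∀ k n : ℕ, ι (T (e k)) n = Th (n - k) :=
    eq_symbol_of_shift_invariant (a := fun k n => ι (T (e k)) n) hT hTh₁ hTh₂
  refine ⟨fun hS hnS k hk => ?_, fun hS' hnS k hk => ?_⟩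
  · by_contra hck
    obtain ⟨m, rfl⟩ : ∃ m : ℕ, k = -(m + 1 : ℕ) := ⟨(-k - 1).toNat, by omega⟩
    refine hnS fun x => ?_
    obtain ⟨w, hw⟩ := exists_forward_shift_iterate (fun x => (hS x).imp fun _ h => h.2) m x
    obtain ⟨y, hy⟩ :=
      exists_backward_shift_of_symbol_ne_zero hι he hdense hcoord hR hRM hTe hck w
    exact ⟨y, fun n => by rw [hy, ← add_assoc, add_right_comm, hw]⟩
  · by_contra hck
    obtain ⟨m, rfl⟩ : ∃ m : ℕ, k = (m + 1 : ℕ) := ⟨(k - 1).toNat, by omega⟩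
    refine hnS fun x => ?_
    obtain ⟨y, hy0, hy⟩ :=
      exists_forward_shift_of_symbol_ne_zero hι he hdense hcoord hR hRM hTe hck x
    obtain ⟨w, hw⟩ := exists_backward_shift_iterate hS' m y
    exact ⟨w, by rw [hw, zero_add]; exact hy0 m (by omega),
      fun n => by rw [hw, add_right_comm, add_assoc, hy]⟩
end

section
/- Assume 𝐒 and 𝐒₋₁ are both bounded on 𝐄. Then for every finitely supported φ ∈ ℂ^ℤ, the operator T_φ : x ↦ P⁺(φ∗x) maps 𝐄 boundedly into 𝐄, and |φ̃(z)| ≤ ‖T_φ‖ for every z ∈ ℂ with 1/ρ(𝐒₋₁) ≤ |z| ≤ ρ(𝐒), where φ̃(z) = Σ_n φ(n) zⁿ (a finite sum) and ‖T_φ‖ is the operator norm of T_φ. -/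
/-!
Write `S` and `M` for the right and left shifts, so that `M * S = 1` and `T_φ` is
`∑ φ j • S ^ j` over `j ≥ 0` plus `∑ φ j • M ^ (-j)` over `j < 0`. For `d` large,
`T_φ * S ^ d = p(S)` and `M ^ d * T_φ = q(M)` are polynomials in `S`, resp. `M`, with
`p(w) = w ^ d φ̃(w)` and `q(w) = w ^ d φ̃(1 / w)`. As `p(S)` commutes with `S`,
`p(S) ^ N = T_φ ^ N * S ^ (d * N)`, and Gelfand's formula gives `ρ(p(S)) ≤ ‖T_φ‖ ρ(S) ^ d`.
The rotations `γ_ζ` conjugate `S` to `ζ • S`, so the spectrum of `S` is invariant under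
rotations and contains the whole circle `|w| = ρ(S)`; there spectral mapping gives
`|w| ^ d |φ̃(w)| = |p(w)| ≤ ρ(p(S))`, hence `|φ̃(w)| ≤ ‖T_φ‖`. The same argument with `M` covers
the circle `|w| = 1 / ρ(M)`, and the maximum modulus principle fills in the annulus.
-/

open scoped ENNReal NNReal
open Filter Topology Polynomial

noncomputable def laurentEval (φ : ℤ →₀ ℂ) (z : ℂ) : ℂ := ∑ j ∈ φ.support, φ j * z ^ j

theorem pow_toNat_eq_zpow {G : Type*} [DivInvMonoid G] {z : G} {k : ℤ} (hk : 0 ≤ k) :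
    z ^ k.toNat = z ^ k := by
  rw [← zpow_natCast, Int.toNat_of_nonneg hk]

theorem eval_sum_C_mul_X_pow_add_toNat {φ : ℤ →₀ ℂ} {d : ℕ} (hd : ∀ j ∈ φ.support, -j ≤ d)
    {z : ℂ} (hz : z ≠ 0) :
    (∑ j ∈ φ.support, C (φ j) * X ^ (j + d).toNat).eval z = z ^ d * laurentEval φ z := by
  simp only [eval_finsetSum, eval_mul, eval_C, eval_pow, eval_X, laurentEval, Finset.mul_sum]
  refine Finset.sum_congr rfl fun j hj => ?_
  rw [pow_toNat_eq_zpow (by linarith [hd j hj]), zpow_add₀ hz, zpow_natCast]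
  ring

theorem eval_sum_C_mul_X_pow_sub_toNat {φ : ℤ →₀ ℂ} {d : ℕ} (hd : ∀ j ∈ φ.support, j ≤ d)
    {z : ℂ} (hz : z ≠ 0) :
    (∑ j ∈ φ.support, C (φ j) * X ^ ((d : ℤ) - j).toNat).eval z = z ^ d * laurentEval φ z⁻¹ := by
  simp only [eval_finsetSum, eval_mul, eval_C, eval_pow, eval_X, laurentEval, Finset.mul_sum]
  refine Finset.sum_congr rfl fun j hj => ?_
  rw [pow_toNat_eq_zpow (by linarith [hd j hj]), zpow_sub₀ hz, zpow_natCast, inv_zpow',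
    zpow_neg, div_eq_mul_inv]
  ring

theorem norm_le_of_nnnorm_pow_mul_le {z w : ℂ} {c : ℝ≥0} {d : ℕ} (hz : z ≠ 0)
    (h : (‖z ^ d * w‖₊ : ℝ≥0∞) ≤ c * ‖z‖₊ ^ d) : ‖w‖ ≤ c := by
  have h' : ‖z‖ ^ d * ‖w‖ ≤ ‖z‖ ^ d * c := by
    rw [mul_comm _ (c : ℝ), ← norm_pow, ← norm_mul, ← coe_nnnorm, ← coe_nnnorm, nnnorm_pow]
    exact_mod_cast h
  exact le_of_mul_le_mul_left h' (pow_pos (norm_pos_iff.mpr hz) d)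

section ShiftZPow

variable {A : Type*} [Monoid A] {s m : A}

def shiftZPow (s m : A) (j : ℤ) : A := if 0 ≤ j then s ^ j.toNat else m ^ (-j).toNat

theorem shiftZPow_mul_pow (hms : m * s = 1) {j : ℤ} {d : ℕ} (hj : -j ≤ d) :
    shiftZPow s m j * s ^ d = s ^ (j + d).toNat := by
  unfold shiftZPow
  split_ifs with h
  · rw [← pow_add]; congr 1; omega
  · rw [show s ^ d = s ^ (-j).toNat * s ^ (j + d).toNat by rw [← pow_add]; congr 1; omega,
      ← mul_assoc, pow_mul_pow_eq_one _ hms, one_mul]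

theorem pow_mul_shiftZPow (hms : m * s = 1) {j : ℤ} {d : ℕ} (hj : j ≤ d) :
    m ^ d * shiftZPow s m j = m ^ ((d : ℤ) - j).toNat := by
  unfold shiftZPow
  split_ifs with h
  · rw [show m ^ d = m ^ ((d : ℤ) - j).toNat * m ^ j.toNat by rw [← pow_add]; congr 1; omega,
      mul_assoc, pow_mul_pow_eq_one _ hms, mul_one]
  · rw [← pow_add]; congr 1; omega

end ShiftZPow

section Toeplitz

variable {A : Type*} [Semiring A] [Algebra ℂ A] {s m : A}

noncomputable def toeplitz (s m : A) (φ : ℤ →₀ ℂ) : A := ∑ j ∈ φ.support, φ j • shiftZPow s m j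

theorem toeplitz_mul_pow (hms : m * s = 1) {φ : ℤ →₀ ℂ} {d : ℕ} (hd : ∀ j ∈ φ.support, -j ≤ d) :
    toeplitz s m φ * s ^ d = aeval s (∑ j ∈ φ.support, C (φ j) * X ^ (j + d).toNat) := by
  simp only [toeplitz, Finset.sum_mul, smul_mul_assoc, map_sum, map_mul, aeval_C, map_pow,
    aeval_X, ← Algebra.smul_def]
  exact Finset.sum_congr rfl fun j hj => by rw [shiftZPow_mul_pow hms (hd j hj)]

theorem pow_mul_toeplitz (hms : m * s = 1) {φ : ℤ →₀ ℂ} {d : ℕ} (hd : ∀ j ∈ φ.support, j ≤ d) :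
    m ^ d * toeplitz s m φ = aeval m (∑ j ∈ φ.support, C (φ j) * X ^ ((d : ℤ) - j).toNat) := by
  simp only [toeplitz, Finset.mul_sum, mul_smul_comm, map_sum, map_mul, aeval_C, map_pow,
    aeval_X, ← Algebra.smul_def]
  exact Finset.sum_congr rfl fun j hj => by rw [pow_mul_shiftZPow hms (hd j hj)]

end Toeplitz

theorem Complex.norm_le_of_forall_norm_eq_le_of_annulus {f : ℂ → ℂ} {r R c : ℝ} (hr : 0 < r)
    (hf : ∀ w : ℂ, w ≠ 0 → DifferentiableAt ℂ f w)
    (h_inner : ∀ w : ℂ, ‖w‖ = r → ‖f w‖ ≤ c) (h_outer : ∀ w : ℂ, ‖w‖ = R → ‖f w‖ ≤ c)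
    {z : ℂ} (hz₁ : r ≤ ‖z‖) (hz₂ : ‖z‖ ≤ R) : ‖f z‖ ≤ c := by
  set U : Set ℂ := norm ⁻¹' Set.Ioo r R
  have hU : IsOpen U := isOpen_Ioo.preimage continuous_norm
  have hclosure : closure U ⊆ norm ⁻¹' Set.Icc r R :=
    closure_minimal (fun w hw => Set.Ioo_subset_Icc_self hw) (isClosed_Icc.preimage continuous_norm)
  have hbdd : Bornology.IsBounded U :=
    (Metric.isBounded_closedBall (x := (0 : ℂ)) (r := R)).subset fun w hw => by
      simpa using hw.2.le
  have hdiff : DifferentiableOn ℂ f (closure U) := fun w hw =>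
    (hf w (norm_pos_iff.mp (hr.trans_le (hclosure hw).1))).differentiableWithinAt
  have hfrontier : ∀ w ∈ frontier U, ‖f w‖ ≤ c := by
    intro w hw
    rw [hU.frontier_eq] at hw
    obtain ⟨hw₁, hw₂⟩ := hclosure hw.1
    rcases hw₁.eq_or_lt with h | h
    · exact h_inner w h.symm
    rcases hw₂.eq_or_lt with h' | h'
    · exact h_outer w h'
    · exact absurd ⟨h, h'⟩ hw.2
  rcases hz₁.eq_or_lt with h | h
  · exact h_inner z h.symm
  rcases hz₂.eq_or_lt with h' | h'
  · exact h_outer z h'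
  exact Complex.norm_le_of_forall_mem_frontier_norm_le hbdd hdiff.diffContOnCl hfrontier
    (subset_closure ⟨h, h'⟩)

section BanachAlgebra

variable {A : Type*} [NormedRing A] [NormedAlgebra ℂ A] [CompleteSpace A]

theorem spectralRadius_ne_top (a : A) : spectralRadius ℂ a ≠ ⊤ :=
  ((spectrum.spectralRadius_le_pow_nnnorm_pow_one_div ℂ a 0).trans_lt
    (by simp [ENNReal.mul_lt_top])).ne

theorem spectralRadius_le_mul_of_eventually_nnnorm_pow_le {a b : A} {c : ℝ≥0}
    (h : ∀ᶠ n in atTop, ‖a ^ n‖₊ ≤ c ^ n * ‖b ^ n‖₊) :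
    spectralRadius ℂ a ≤ c * spectralRadius ℂ b := by
  refine le_of_tendsto_of_tendsto (spectrum.pow_nnnorm_pow_one_div_tendsto_nhds_spectralRadius a)
    (ENNReal.Tendsto.const_mul (spectrum.pow_nnnorm_pow_one_div_tendsto_nhds_spectralRadius b)
      (Or.inr ENNReal.coe_ne_top)) ?_
  filter_upwards [h, eventually_ne_atTop 0] with n hn hn0
  calc (‖a ^ n‖₊ : ℝ≥0∞) ^ (1 / n : ℝ) ≤ ((c : ℝ≥0∞) ^ n * ‖b ^ n‖₊) ^ (1 / n : ℝ) := by
        gcongr; exact_mod_cast hn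
    _ = c * (‖b ^ n‖₊ : ℝ≥0∞) ^ (1 / n : ℝ) := by
        rw [ENNReal.mul_rpow_of_nonneg _ _ (by positivity), one_div,
          ENNReal.pow_rpow_inv_natCast hn0]

theorem spectralRadius_pow_le_pow [Nontrivial A] (a : A) (n : ℕ) :
    spectralRadius ℂ (a ^ n) ≤ spectralRadius ℂ a ^ n := by
  refine iSup₂_le fun k hk => ?_
  obtain ⟨μ, hμ, rfl⟩ := spectrum.map_pow a n ▸ hk
  rw [nnnorm_pow, ENNReal.coe_pow]
  exact pow_le_pow_left₀ zero_le (le_iSup₂ (α := ℝ≥0∞) μ hμ) n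

theorem spectralRadius_mul_le_of_commute {t b : A} (h : Commute (t * b) b) :
    spectralRadius ℂ (t * b) ≤ ‖t‖₊ * spectralRadius ℂ b := by
  have hpow : ∀ n : ℕ, (t * b) ^ n = t ^ n * b ^ n := by
    intro n
    induction n with
    | zero => simp
    | succ n ih =>
      rw [pow_succ, ih, mul_assoc, ← (h.pow_right n).eq, ← mul_assoc, ← mul_assoc, ← pow_succ,
        mul_assoc, ← pow_succ']
  refine spectralRadius_le_mul_of_eventually_nnnorm_pow_le ?_
  filter_upwards [eventually_gt_atTop 0] with n hn
  rw [hpow]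
  exact (nnnorm_mul_le _ _).trans (mul_le_mul_left (nnnorm_pow_le' t hn) _)

theorem spectralRadius_mul_le_of_commute' {t b : A} (h : Commute (b * t) b) :
    spectralRadius ℂ (b * t) ≤ ‖t‖₊ * spectralRadius ℂ b := by
  have hpow : ∀ n : ℕ, (b * t) ^ n = b ^ n * t ^ n := by
    intro n
    induction n with
    | zero => simp
    | succ n ih =>
      rw [pow_succ', ih, ← mul_assoc, (h.pow_right n).eq, mul_assoc, mul_assoc, ← pow_succ',
        ← mul_assoc, ← pow_succ]
  refine spectralRadius_le_mul_of_eventually_nnnorm_pow_le ?_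
  filter_upwards [eventually_gt_atTop 0] with n hn
  rw [hpow, mul_comm (_ ^ n)]
  exact (nnnorm_mul_le _ _).trans (mul_le_mul_right (nnnorm_pow_le' t hn) _)

theorem nnnorm_eval_le_of_aeval_eq_mul_pow [Nontrivial A] {s t : A} {p : ℂ[X]} {d : ℕ}
    (hp : aeval s p = t * s ^ d) {z : ℂ} (hz : z ∈ spectrum ℂ s) :
    (‖p.eval z‖₊ : ℝ≥0∞) ≤ ‖t‖₊ * spectralRadius ℂ s ^ d := by
  have hcomm : Commute (t * s ^ d) (s ^ d) := by
    simpa [hp] using ((Commute.all p X).map (aeval s)).pow_right d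
  calc (‖p.eval z‖₊ : ℝ≥0∞) ≤ spectralRadius ℂ (t * s ^ d) :=
        le_iSup₂ (α := ℝ≥0∞) _ (hp ▸ spectrum.subset_polynomial_aeval s p ⟨z, hz, rfl⟩)
    _ ≤ ‖t‖₊ * spectralRadius ℂ (s ^ d) := spectralRadius_mul_le_of_commute hcomm
    _ ≤ ‖t‖₊ * spectralRadius ℂ s ^ d := by gcongr; exact spectralRadius_pow_le_pow s d

theorem nnnorm_eval_le_of_aeval_eq_pow_mul [Nontrivial A] {s t : A} {p : ℂ[X]} {d : ℕ}
    (hp : aeval s p = s ^ d * t) {z : ℂ} (hz : z ∈ spectrum ℂ s) :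
    (‖p.eval z‖₊ : ℝ≥0∞) ≤ ‖t‖₊ * spectralRadius ℂ s ^ d := by
  have hcomm : Commute (s ^ d * t) (s ^ d) := by
    simpa [hp] using ((Commute.all p X).map (aeval s)).pow_right d
  calc (‖p.eval z‖₊ : ℝ≥0∞) ≤ spectralRadius ℂ (s ^ d * t) :=
        le_iSup₂ (α := ℝ≥0∞) _ (hp ▸ spectrum.subset_polynomial_aeval s p ⟨z, hz, rfl⟩)
    _ ≤ ‖t‖₊ * spectralRadius ℂ (s ^ d) := spectralRadius_mul_le_of_commute' hcomm
    _ ≤ ‖t‖₊ * spectralRadius ℂ s ^ d := by gcongr; exact spectralRadius_pow_le_pow s d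

theorem mem_spectrum_of_nnnorm_eq_spectralRadius [Nontrivial A] {a : A}
    (hrot : ∀ ζ : ℂ, ‖ζ‖ = 1 → ∃ u : Aˣ, ↑u * a * ↑u⁻¹ = ζ • a) {z : ℂ}
    (hz : (‖z‖₊ : ℝ≥0∞) = spectralRadius ℂ a) : z ∈ spectrum ℂ a := by
  obtain ⟨μ, hμ, hμz⟩ := spectrum.exists_nnnorm_eq_spectralRadius a
  have hnorm : ‖z‖ = ‖μ‖ := by
    rw [← coe_nnnorm, ← coe_nnnorm, ENNReal.coe_inj.mp (hz.trans hμz.symm)]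
  rcases eq_or_ne μ 0 with rfl | hμ0
  · rwa [norm_eq_zero.mp (hnorm.trans norm_zero)]
  have hζ : ‖z / μ‖ = 1 := by rw [norm_div, hnorm, div_self (norm_ne_zero_iff.mpr hμ0)]
  have hζ0 : z / μ ≠ 0 := norm_ne_zero_iff.mp (hζ ▸ one_ne_zero)
  obtain ⟨u, hu⟩ := hrot _ hζ
  have := (spectrum.smul_mem_smul_iff (r := Units.mk0 _ hζ0)).mpr hμ
  rwa [Units.smul_def, Units.smul_def, Units.val_mk0, ← hu, spectrum.units_conjugate,
    smul_eq_mul, div_mul_cancel₀ z hμ0] at this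

theorem norm_laurentEval_le_of_nnnorm_eq_spectralRadius [Nontrivial A] {s m : A}
    (hms : m * s = 1) (hs : ∀ ζ : ℂ, ‖ζ‖ = 1 → ∃ u : Aˣ, ↑u * s * ↑u⁻¹ = ζ • s)
    (φ : ℤ →₀ ℂ) {z : ℂ} (hz0 : z ≠ 0) (hz : (‖z‖₊ : ℝ≥0∞) = spectralRadius ℂ s) :
    ‖laurentEval φ z‖ ≤ ‖toeplitz s m φ‖ := by
  obtain ⟨d, hd⟩ : ∃ d : ℕ, ∀ j ∈ φ.support, j.natAbs ≤ d := ⟨_, fun _ => Finset.le_sup⟩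
  have hd' : ∀ j ∈ φ.support, -j ≤ d := fun j hj => by have := hd j hj; omega
  have h := nnnorm_eval_le_of_aeval_eq_mul_pow (toeplitz_mul_pow hms hd').symm
    (mem_spectrum_of_nnnorm_eq_spectralRadius hs hz)
  rw [eval_sum_C_mul_X_pow_add_toNat hd' hz0, ← hz] at h
  exact norm_le_of_nnnorm_pow_mul_le hz0 h

theorem norm_laurentEval_le_of_nnnorm_eq_inv_spectralRadius [Nontrivial A] {s m : A}
    (hms : m * s = 1) (hm : ∀ ζ : ℂ, ‖ζ‖ = 1 → ∃ u : Aˣ, ↑u * m * ↑u⁻¹ = ζ • m)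
    (φ : ℤ →₀ ℂ) {z : ℂ} (hz0 : z ≠ 0) (hz : (‖z‖₊ : ℝ≥0∞) = (spectralRadius ℂ m)⁻¹) :
    ‖laurentEval φ z‖ ≤ ‖toeplitz s m φ‖ := by
  obtain ⟨d, hd⟩ : ∃ d : ℕ, ∀ j ∈ φ.support, j.natAbs ≤ d := ⟨_, fun _ => Finset.le_sup⟩
  have hd' : ∀ j ∈ φ.support, j ≤ d := fun j hj => by have := hd j hj; omega
  have hz' : (‖z⁻¹‖₊ : ℝ≥0∞) = spectralRadius ℂ m := by
    rw [nnnorm_inv, ENNReal.coe_inv (nnnorm_ne_zero_iff.mpr hz0), hz, inv_inv]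
  have h := nnnorm_eval_le_of_aeval_eq_pow_mul (pow_mul_toeplitz hms hd').symm
    (mem_spectrum_of_nnnorm_eq_spectralRadius hm hz')
  rw [eval_sum_C_mul_X_pow_sub_toNat hd' (inv_ne_zero hz0), inv_inv, ← hz'] at h
  exact norm_le_of_nnnorm_pow_mul_le (inv_ne_zero hz0) h

theorem norm_laurentEval_le_norm_toeplitz {s m : A} (hms : m * s = 1)
    (hs : ∀ ζ : ℂ, ‖ζ‖ = 1 → ∃ u : Aˣ, ↑u * s * ↑u⁻¹ = ζ • s)
    (hm : ∀ ζ : ℂ, ‖ζ‖ = 1 → ∃ u : Aˣ, ↑u * m * ↑u⁻¹ = ζ • m) (φ : ℤ →₀ ℂ) {z : ℂ}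
    (hz₁ : (spectralRadius ℂ m)⁻¹ ≤ ‖z‖₊) (hz₂ : ‖z‖₊ ≤ spectralRadius ℂ s) :
    ‖laurentEval φ z‖ ≤ ‖toeplitz s m φ‖ := by
  have hρm : spectralRadius ℂ m ≠ 0 := fun h => by simp [h] at hz₁
  have : Nontrivial A :=
    not_subsingleton_iff_nontrivial.mp fun _ => hρm (spectrum.SpectralRadius.of_subsingleton m)
  have hr : 0 < ((spectralRadius ℂ m)⁻¹).toReal :=
    ENNReal.toReal_pos (ENNReal.inv_ne_zero.mpr (spectralRadius_ne_top m))
      (ne_top_of_le_ne_top ENNReal.coe_ne_top hz₁)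
  have hnnnorm : ∀ {c : ℝ≥0∞}, c ≠ ⊤ → ∀ w : ℂ, ‖w‖ = c.toReal → (‖w‖₊ : ℝ≥0∞) = c := by
    intro c hc w hw
    rw [← enorm_eq_nnnorm, ← ofReal_norm, hw, ENNReal.ofReal_toReal hc]
  have hz₁' : ((spectralRadius ℂ m)⁻¹).toReal ≤ ‖z‖ := by
    simpa using ENNReal.toReal_mono ENNReal.coe_ne_top hz₁
  have hz₂' : ‖z‖ ≤ (spectralRadius ℂ s).toReal := by
    simpa using ENNReal.toReal_mono (spectralRadius_ne_top s) hz₂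
  refine Complex.norm_le_of_forall_norm_eq_le_of_annulus hr
    (fun w hw => by unfold laurentEval; fun_prop (disch := simp [hw]))
    (fun w hw => ?_) (fun w hw => ?_) hz₁' hz₂'
  · exact norm_laurentEval_le_of_nnnorm_eq_inv_spectralRadius hms hm φ
      (norm_pos_iff.mp (hw ▸ hr)) (hnnnorm (ENNReal.inv_ne_top.mpr hρm) w hw)
  · exact norm_laurentEval_le_of_nnnorm_eq_spectralRadius hms hs φ
      (norm_pos_iff.mp (hw ▸ hr.trans_le (hz₁'.trans hz₂')))
      (hnnnorm (spectralRadius_ne_top s) w hw)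

end BanachAlgebra

section SequenceSpace

variable {E : Type*} [NormedAddCommGroup E] [NormedSpace ℂ E] {ι : E →ₗ[ℂ] (ℕ → ℂ)}

def IsRightShift (ι : E →ₗ[ℂ] (ℕ → ℂ)) (S : E →L[ℂ] E) : Prop :=
  ∀ x : E, ι (S x) 0 = 0 ∧ ∀ n : ℕ, ι (S x) (n + 1) = ι x n

def IsLeftShift (ι : E →ₗ[ℂ] (ℕ → ℂ)) (M : E →L[ℂ] E) : Prop :=
  ∀ x : E, ∀ n : ℕ, ι (M x) n = ι x (n + 1)

theorem ContinuousLinearMap.ext_of_coord (hι : Function.Injective ι) {F G : E →L[ℂ] E}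
    (h : ∀ x n, ι (F x) n = ι (G x) n) : F = G :=
  ContinuousLinearMap.ext fun x => hι (funext (h x))

theorem IsRightShift.coord_pow {S : E →L[ℂ] E} (hS : IsRightShift ι S) (t : ℕ) (x : E) (n : ℕ) :
    ι ((S ^ t) x) n = if t ≤ n then ι x (n - t) else 0 := by
  induction t generalizing n with
  | zero => simp
  | succ t ih =>
    rw [pow_succ', mul_apply_eq_comp]
    cases n with
    | zero => simp [(hS _).1]
    | succ n =>
      rw [(hS _).2, ih]
      simp only [Nat.add_le_add_iff_right, Nat.add_sub_add_right]

theorem IsLeftShift.coord_pow {M : E →L[ℂ] E} (hM : IsLeftShift ι M) (t : ℕ) (x : E) (n : ℕ) :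
    ι ((M ^ t) x) n = ι x (n + t) := by
  induction t generalizing n with
  | zero => simp
  | succ t ih => rw [pow_succ', mul_apply_eq_comp, hM, ih, add_right_comm]; rfl

theorem IsLeftShift.mul_eq_one (hι : Function.Injective ι) {S M : E →L[ℂ] E}
    (hM : IsLeftShift ι M) (hS : IsRightShift ι S) : M * S = 1 :=
  ContinuousLinearMap.ext_of_coord hι fun x n => by
    rw [mul_apply_eq_comp, hM, (hS x).2]; rfl

theorem coord_shiftZPow {S M : E →L[ℂ] E} (hS : IsRightShift ι S) (hM : IsLeftShift ι M)
    (j : ℤ) (x : E) (n : ℕ) :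
    ι (shiftZPow S M j x) n = if 0 ≤ (n : ℤ) - j then ι x ((n : ℤ) - j).toNat else 0 := by
  by_cases hj : 0 ≤ j
  · rw [shiftZPow, if_pos hj, hS.coord_pow]
    by_cases hn : j ≤ n
    · rw [if_pos (by omega), if_pos (by omega), show n - j.toNat = ((n : ℤ) - j).toNat by omega]
    · rw [if_neg (by omega), if_neg (by omega)]
  · rw [shiftZPow, if_neg hj, hM.coord_pow, if_pos (by omega),
      show n + (-j).toNat = ((n : ℤ) - j).toNat by omega]

theorem coord_toeplitz {S M : E →L[ℂ] E} (hS : IsRightShift ι S) (hM : IsLeftShift ι M)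
    (φ : ℤ →₀ ℂ) (x : E) (n : ℕ) :
    ι (toeplitz S M φ x) n =
      ∑ j ∈ φ.support, φ j * (if 0 ≤ (n : ℤ) - j then ι x ((n : ℤ) - j).toNat else 0) := by
  simp [toeplitz, coord_shiftZPow hS hM]

def HasRotations (ι : E →ₗ[ℂ] (ℕ → ℂ)) : Prop :=
  ∀ ζ : ℂ, ‖ζ‖ = 1 → ∃ u : (E →L[ℂ] E)ˣ,
    ∀ x n, ι ((u : E →L[ℂ] E) x) n = ζ ^ n * ι x n ∧
      ι ((↑u⁻¹ : E →L[ℂ] E) x) n = ζ⁻¹ ^ n * ι x n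

theorem exists_clm_coord_eq_pow_mul (hι : Function.Injective ι) {g : E → E} {ζ : ℂ}
    (hg : ∀ x n, ι (g x) n = ζ ^ n * ι x n) (hbdd : ∃ C, ∀ x, ‖g x‖ ≤ C * ‖x‖) :
    ∃ G : E →L[ℂ] E, ∀ x n, ι (G x) n = ζ ^ n * ι x n :=
  ⟨LinearMap.mkContinuousOfExistsBound
    { toFun := g
      map_add' := fun x y => hι (funext fun n => by simp only [hg, map_add, Pi.add_apply]; ring)
      map_smul' := fun c x => hι (funext fun n => by
        simp only [hg, map_smul, Pi.smul_apply, smul_eq_mul, RingHom.id_apply]; ring) } hbdd, hg⟩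

theorem hasRotations_of_bounded (hι : Function.Injective ι) {Γ : ℂ → E → E}
    (hΓ : ∀ z : ℂ, ‖z‖ = 1 → ∀ x : E, ∀ n : ℕ, ι (Γ z x) n = z ^ n * ι x n)
    (hΓbdd : ∃ C : ℝ, ∀ z : ℂ, ‖z‖ = 1 → ∀ x : E, ‖Γ z x‖ ≤ C * ‖x‖) : HasRotations ι := by
  intro ζ hζ
  obtain ⟨C, hC⟩ := hΓbdd
  have hζ' : ‖ζ⁻¹‖ = 1 := by rw [norm_inv, hζ, inv_one]
  have hζ0 : ζ ≠ 0 := norm_ne_zero_iff.mp (hζ ▸ one_ne_zero)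
  obtain ⟨G, hG⟩ := exists_clm_coord_eq_pow_mul hι (hΓ ζ hζ) ⟨C, hC ζ hζ⟩
  obtain ⟨G', hG'⟩ := exists_clm_coord_eq_pow_mul hι (hΓ ζ⁻¹ hζ') ⟨C, hC ζ⁻¹ hζ'⟩
  refine ⟨⟨G, G', ContinuousLinearMap.ext_of_coord hι fun x n => ?_,
    ContinuousLinearMap.ext_of_coord hι fun x n => ?_⟩, fun x n => ⟨hG x n, hG' x n⟩⟩
  all_goals
    simp only [mul_apply_eq_comp, hG, hG', one_apply_eq_self]
    linear_combination (ι x n) * pow_mul_pow_eq_one n (mul_inv_cancel₀ hζ0)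

theorem IsRightShift.exists_units_conj_eq_smul (hι : Function.Injective ι) {S : E →L[ℂ] E}
    (hS : IsRightShift ι S) (hrot : HasRotations ι) :
    ∀ ζ : ℂ, ‖ζ‖ = 1 → ∃ u : (E →L[ℂ] E)ˣ, ↑u * S * ↑u⁻¹ = ζ • S := by
  intro ζ hζ
  have hζ0 : ζ ≠ 0 := norm_ne_zero_iff.mp (hζ ▸ one_ne_zero)
  obtain ⟨u, hu⟩ := hrot ζ hζ
  refine ⟨u, ContinuousLinearMap.ext_of_coord hι fun x n => ?_⟩
  rw [mul_apply_eq_comp, mul_apply_eq_comp, (hu _ _).1, smul_apply, map_smul, Pi.smul_apply,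
    smul_eq_mul]
  cases n with
  | zero => simp [(hS _).1]
  | succ n =>
    rw [(hS _).2, (hS _).2, (hu _ _).2]
    linear_combination (ζ * ι x n) * pow_mul_pow_eq_one n (mul_inv_cancel₀ hζ0)

theorem IsLeftShift.exists_units_conj_eq_smul (hι : Function.Injective ι) {M : E →L[ℂ] E}
    (hM : IsLeftShift ι M) (hrot : HasRotations ι) :
    ∀ ζ : ℂ, ‖ζ‖ = 1 → ∃ u : (E →L[ℂ] E)ˣ, ↑u * M * ↑u⁻¹ = ζ • M := by
  intro ζ hζ
  have hζ0 : ζ ≠ 0 := norm_ne_zero_iff.mp (hζ ▸ one_ne_zero)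
  obtain ⟨u, hu⟩ := hrot ζ hζ
  refine ⟨u⁻¹, ContinuousLinearMap.ext_of_coord hι fun x n => ?_⟩
  rw [inv_inv, mul_apply_eq_comp, mul_apply_eq_comp, smul_apply, map_smul, Pi.smul_apply,
    smul_eq_mul, (hu _ _).2, hM, hM, (hu _ _).1]
  linear_combination (ζ * ι x (n + 1)) * pow_mul_pow_eq_one n (inv_mul_cancel₀ hζ0)

end SequenceSpace

theorem stmt17_general
    {E : Type*} [NormedAddCommGroup E] [NormedSpace ℂ E] [CompleteSpace E]
    (ι : E →ₗ[ℂ] (ℕ → ℂ)) (hι : Function.Injective ι)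
    (Γ : ℂ → E → E)
    (hΓ : ∀ z : ℂ, ‖z‖ = 1 → ∀ x : E, ∀ n : ℕ, ι (Γ z x) n = z ^ n * ι x n)
    (hΓbdd : ∃ C : ℝ, ∀ z : ℂ, ‖z‖ = 1 → ∀ x : E, ‖Γ z x‖ ≤ C * ‖x‖)
    -- `𝐒` and `𝐒₋₁` are both bounded, with restrictions `Sop` and `Mop` to `𝐄`:
    (Sop Mop : E →L[ℂ] E)
    (hSop : ∀ x : E, ι (Sop x) 0 = 0 ∧ ∀ n : ℕ, ι (Sop x) (n + 1) = ι x n)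
    (hMop : ∀ x : E, ∀ n : ℕ, ι (Mop x) n = ι x (n + 1))
    (φ : ℤ →₀ ℂ) :
    ∃ Tφ : E →L[ℂ] E,
      (∀ x : E, ∀ m : ℕ, ι (Tφ x) m =
        ∑ j ∈ φ.support, φ j * (if 0 ≤ (m : ℤ) - j then ι x ((m : ℤ) - j).toNat else 0)) ∧
      ∀ z : ℂ, (spectralRadius ℂ Mop)⁻¹ ≤ (‖z‖₊ : ℝ≥0∞) →
        (‖z‖₊ : ℝ≥0∞) ≤ spectralRadius ℂ Sop →
        ‖∑ j ∈ φ.support, φ j * z ^ j‖ ≤ ‖Tφ‖ := by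
  have hrot := hasRotations_of_bounded hι hΓ hΓbdd
  refine ⟨toeplitz Sop Mop φ, coord_toeplitz hSop hMop φ, fun z hz₁ hz₂ => ?_⟩
  exact norm_laurentEval_le_norm_toeplitz (IsLeftShift.mul_eq_one hι hMop hSop)
    (IsRightShift.exists_units_conj_eq_smul hι hSop hrot)
    (IsLeftShift.exists_units_conj_eq_smul hι hMop hrot) φ hz₁ hz₂

/-- If `𝐒` and `𝐒₋₁` are both bounded on `𝐄`, then for every finitely supported
`φ : ℤ → ℂ` the operator `T_φ : x ↦ P⁺(φ∗x)` maps `𝐄` boundedly into `𝐄`, and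
`|φ̃(z)| ≤ ‖T_φ‖` for every `z` with `1/ρ(𝐒₋₁) ≤ |z| ≤ ρ(𝐒)`. -/
theorem stmt17
    {E : Type*} [NormedAddCommGroup E] [NormedSpace ℂ E] [CompleteSpace E]
    (ι : E →ₗ[ℂ] (ℕ → ℂ)) (hι : Function.Injective ι)
    (e : ℕ → E) (he : ∀ k : ℕ, ι (e k) = Pi.single k 1)
    (hdense : Dense (Submodule.span ℂ (Set.range e) : Set E))
    (hcoord : ∀ n : ℕ, Continuous fun x : E => ι x n)
    (Γ : ℂ → E → E)
    (hΓ : ∀ z : ℂ, ‖z‖ = 1 → ∀ x : E, ∀ n : ℕ, ι (Γ z x) n = z ^ n * ι x n)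
    (hΓbdd : ∃ C : ℝ, ∀ z : ℂ, ‖z‖ = 1 → ∀ x : E, ‖Γ z x‖ ≤ C * ‖x‖)
    -- `𝐒` and `𝐒₋₁` are both bounded, with restrictions `Sop` and `Mop` to `𝐄`:
    (Sop Mop : E →L[ℂ] E)
    (hSop : ∀ x : E, ι (Sop x) 0 = 0 ∧ ∀ n : ℕ, ι (Sop x) (n + 1) = ι x n)
    (hMop : ∀ x : E, ∀ n : ℕ, ι (Mop x) n = ι x (n + 1))
    (φ : ℤ →₀ ℂ) :
    ∃ Tφ : E →L[ℂ] E,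
      (∀ x : E, ∀ m : ℕ, ι (Tφ x) m =
        ∑ j ∈ φ.support, φ j * (if 0 ≤ (m : ℤ) - j then ι x ((m : ℤ) - j).toNat else 0)) ∧
      ∀ z : ℂ, (spectralRadius ℂ Mop)⁻¹ ≤ (‖z‖₊ : ℝ≥0∞) →
        (‖z‖₊ : ℝ≥0∞) ≤ spectralRadius ℂ Sop →
        ‖∑ j ∈ φ.support, φ j * z ^ j‖ ≤ ‖Tφ‖ :=
  stmt17_general ι hι Γ hΓ hΓbdd Sop Mop hSop hMop φ
end
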